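/- arXiv:1810.00156 — 7 statements merged into one kernel-verified Lean document; each statement's English description precedes it below -/
import Mathlib

section
/- Let a₀, a₁, a₂ be real numbers with a₂ > 0. Both roots of the quadratic a₂λ² + a₁λ + a₀ = 0 lie strictly inside the unit circle of ℂ if and only if a₂ + a₁ + a₀ > 0, a₂ − a₁ + a₀ > 0, and |a₀| < a₂. -/
/-!
After dividing by `a₂`, factor `z² + b z + c = (z - r)(z - s)`. For real roots, `1 + b + c`,
`1 - b + c` and `c` are `(1 - r)(1 - s)`, `(1 + r)(1 + s)` and `r s`, and these three conditions
together say exactly `|r|, |s| < 1`. For a conjugate pair `s = r̄`, they are `|1 - r|²`,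
`|1 + r|²` (automatically positive) and `|r|²`, so only `|c| < 1` matters.
-/

open ComplexConjugate

lemma forall_mul_sub_eq_zero_imp_norm_lt_one_iff {R : Type*} [NormedRing R] [NoZeroDivisors R]
    (r s : R) : (∀ z : R, (z - r) * (z - s) = 0 → ‖z‖ < 1) ↔ ‖r‖ < 1 ∧ ‖s‖ < 1 := by
  simp only [mul_eq_zero, sub_eq_zero, or_imp, forall_and, forall_eq]

lemma abs_lt_one_and_abs_lt_one_iff (r s : ℝ) :
    |r| < 1 ∧ |s| < 1 ↔ 0 < (1 - r) * (1 - s) ∧ 0 < (1 + r) * (1 + s) ∧ |r * s| < 1 := by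
  constructor
  · rintro ⟨hr, hs⟩
    obtain ⟨hr₁, hr₂⟩ := abs_lt.mp hr
    obtain ⟨hs₁, hs₂⟩ := abs_lt.mp hs
    refine ⟨by nlinarith, by nlinarith, ?_⟩
    rw [abs_mul]
    exact mul_lt_one_of_nonneg_of_lt_one_left (abs_nonneg r) hr hs.le
  · rintro ⟨h₁, h₂, h₃⟩
    obtain ⟨h₃₁, h₃₂⟩ := abs_lt.mp h₃
    constructor <;> rw [abs_lt] <;> constructor <;> nlinarith

lemma exists_eq_neg_add_and_eq_mul_of_four_mul_le_sq {b c : ℝ} (h : 4 * c ≤ b ^ 2) :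
    ∃ r s : ℝ, b = -(r + s) ∧ c = r * s := by
  have hd : √(b ^ 2 - 4 * c) ^ 2 = b ^ 2 - 4 * c := Real.sq_sqrt (by linarith)
  exact ⟨(-b + √(b ^ 2 - 4 * c)) / 2, (-b - √(b ^ 2 - 4 * c)) / 2, by ring,
    by linear_combination hd / 4⟩

lemma exists_eq_neg_two_mul_re_and_eq_normSq_of_sq_lt_four_mul {b c : ℝ} (h : b ^ 2 < 4 * c) :
    ∃ w : ℂ, w.im ≠ 0 ∧ b = -2 * w.re ∧ c = Complex.normSq w := by
  have hd : √(4 * c - b ^ 2) ^ 2 = 4 * c - b ^ 2 := Real.sq_sqrt (by linarith)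
  have hpos : 0 < √(4 * c - b ^ 2) := Real.sqrt_pos.mpr (by linarith)
  refine ⟨⟨-b / 2, √(4 * c - b ^ 2) / 2⟩, by simp [hpos.ne'], by simp; ring, ?_⟩
  rw [Complex.normSq_mk]
  linear_combination -hd / 4

lemma jury_criterion_monic (b c : ℝ) :
    (∀ z : ℂ, z ^ 2 + (b : ℂ) * z + (c : ℂ) = 0 → ‖z‖ < 1) ↔
      0 < 1 + b + c ∧ 0 < 1 - b + c ∧ |c| < 1 := by
  rcases le_or_gt (4 * c) (b ^ 2) with hd | hd
  · obtain ⟨r, s, rfl, rfl⟩ := exists_eq_neg_add_and_eq_mul_of_four_mul_le_sq hd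
    have hfac : ∀ z : ℂ, z ^ 2 + ((-(r + s) : ℝ) : ℂ) * z + ((r * s : ℝ) : ℂ)
        = (z - r) * (z - s) := fun z => by push_cast; ring
    simp only [hfac, forall_mul_sub_eq_zero_imp_norm_lt_one_iff, Complex.norm_real,
      Real.norm_eq_abs, abs_lt_one_and_abs_lt_one_iff]
    constructor <;> rintro ⟨h₁, h₂, h₃⟩ <;> exact ⟨by linarith, by linarith, h₃⟩
  · obtain ⟨w, hw, rfl, rfl⟩ := exists_eq_neg_two_mul_re_and_eq_normSq_of_sq_lt_four_mul hd
    have hfac : ∀ z : ℂ, z ^ 2 + ((-2 * w.re : ℝ) : ℂ) * z + ((Complex.normSq w : ℝ) : ℂ)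
        = (z - w) * (z - conj w) := fun z => by
      rw [← Complex.mul_conj]; push_cast; rw [Complex.re_eq_add_conj]; ring
    have hw₁ : 1 - w ≠ 0 := fun h => hw (by simpa using congrArg Complex.im h)
    have hw₂ : 1 + w ≠ 0 := fun h => hw (by simpa using congrArg Complex.im h)
    have h₁ : 1 + -2 * w.re + Complex.normSq w = Complex.normSq (1 - w) := by
      simp only [Complex.normSq_apply, Complex.sub_re, Complex.sub_im, Complex.one_re,
        Complex.one_im]; ring
    have h₂ : 1 - -2 * w.re + Complex.normSq w = Complex.normSq (1 + w) := by
      simp only [Complex.normSq_apply, Complex.add_re, Complex.add_im, Complex.one_re,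
        Complex.one_im]; ring
    simp only [hfac, forall_mul_sub_eq_zero_imp_norm_lt_one_iff, Complex.norm_conj, and_self,
      h₁, h₂]
    rw [abs_of_nonneg (Complex.normSq_nonneg w), Complex.normSq_eq_norm_sq w,
      sq_lt_one_iff₀ (norm_nonneg w)]
    exact ⟨fun h => ⟨Complex.normSq_pos.mpr hw₁, Complex.normSq_pos.mpr hw₂, h⟩, fun h => h.2.2⟩

/-- Jury stability criterion for real quadratics: both complex roots of
`a₂λ² + a₁λ + a₀` lie strictly inside the unit circle iff
`a₂ + a₁ + a₀ > 0`, `a₂ − a₁ + a₀ > 0`, and `|a₀| < a₂`. -/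
theorem stmt7 (a₀ a₁ a₂ : ℝ) (ha₂ : 0 < a₂) :
    (∀ z : ℂ, (a₂ : ℂ) * z ^ 2 + (a₁ : ℂ) * z + (a₀ : ℂ) = 0 → ‖z‖ < 1) ↔
      (0 < a₂ + a₁ + a₀ ∧ 0 < a₂ - a₁ + a₀ ∧ |a₀| < a₂) := by
  obtain ⟨b, rfl⟩ : ∃ b, a₁ = a₂ * b := ⟨a₁ / a₂, by field_simp⟩
  obtain ⟨c, rfl⟩ : ∃ c, a₀ = a₂ * c := ⟨a₀ / a₂, by field_simp⟩
  have hfac : ∀ z : ℂ, (a₂ : ℂ) * z ^ 2 + ((a₂ * b : ℝ) : ℂ) * z + ((a₂ * c : ℝ) : ℂ)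
      = a₂ * (z ^ 2 + b * z + c) := fun z => by push_cast; ring
  have h₁ : a₂ + a₂ * b + a₂ * c = a₂ * (1 + b + c) := by ring
  have h₂ : a₂ - a₂ * b + a₂ * c = a₂ * (1 - b + c) := by ring
  simp only [hfac, mul_eq_zero, Complex.ofReal_eq_zero, ha₂.ne', false_or, jury_criterion_monic,
    h₁, h₂, mul_pos_iff_of_pos_left ha₂, abs_mul, abs_of_pos ha₂, mul_lt_iff_lt_one_right ha₂]
end

section
/- Let W be a real symmetric N×N matrix with −I_N ≺ W ⪯ I_N, let H̃ be a symmetric positive semidefinite Nm×Nm matrix, and let α > 0. Then the matrix (W + I_N)² ⊗ I_m − 2α H̃ is positive definite if and only if α < 1/(2 λ_max(((I_N + W)⁻² ⊗ I_m) H̃)). -/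
/-!
Write `B = √A`, an invertible Hermitian matrix. Then `A - H = B (1 - M) B` with
`M = B⁻¹ H B⁻¹` Hermitian, so `A - H ≻ 0` iff every eigenvalue of `M` is `< 1`; and
`A⁻¹ H = B⁻¹ M B` is similar to `M`, so these are exactly the eigenvalues of `A⁻¹ H`.
-/

open Matrix Kronecker

namespace Matrix

open scoped ComplexOrder Pointwise

variable {𝕜 n : Type*} [RCLike 𝕜] [Fintype n] [DecidableEq n]

theorem IsHermitian.posDef_iff_spectrum_pos {X : Matrix n n 𝕜} (hX : X.IsHermitian) :
    X.PosDef ↔ ∀ μ ∈ spectrum ℝ X, 0 < μ := by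
  rw [hX.posDef_iff_eigenvalues_pos, hX.spectrum_real_eq_range_eigenvalues, Set.forall_mem_range]

theorem IsHermitian.posDef_one_sub_iff {X : Matrix n n 𝕜} (hX : X.IsHermitian) :
    (1 - X).PosDef ↔ ∀ μ ∈ spectrum ℝ X, μ < 1 := by
  rw [(isHermitian_one.sub hX).posDef_iff_spectrum_pos, ← map_one (algebraMap ℝ (Matrix n n 𝕜)),
    ← spectrum.singleton_sub_eq]
  simp [sub_pos]

open scoped MatrixOrder in
theorem PosDef.posDef_sub_iff {A H : Matrix n n 𝕜} (hA : A.PosDef) (hH : H.IsHermitian) :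
    (A - H).PosDef ↔ ∀ μ ∈ spectrum ℝ (A⁻¹ * H), μ < 1 := by
  have hsqrt : IsStrictlyPositive (CFC.sqrt A) := hA.isStrictlyPositive.sqrt
  obtain ⟨B, hBA⟩ := hsqrt.isUnit
  have hBB : (B : Matrix n n 𝕜) * B = A := hBA ▸ CFC.sqrt_mul_sqrt_self A hA.posSemidef.nonneg
  have hBs : star (B : Matrix n n 𝕜) = B := hBA ▸ hsqrt.isSelfAdjoint.star_eq
  have hC : ((B⁻¹ : (Matrix n n 𝕜)ˣ) : Matrix n n 𝕜) = (B : Matrix n n 𝕜)⁻¹ :=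
    Matrix.coe_units_inv B
  set C : Matrix n n 𝕜 := ↑(B⁻¹)
  set M : Matrix n n 𝕜 := C * H * C
  have hCs : Cᴴ = C := by
    rw [hC, conjTranspose_nonsing_inv, ← star_eq_conjTranspose, hBs]
  have hM : M.IsHermitian := by
    simpa only [M, hCs] using isHermitian_conjTranspose_mul_mul C hH
  have hsub : A - H = star (B : Matrix n n 𝕜) * (1 - M) * B := by
    rw [hBs, ← hBB]; simp [M, C, mul_sub, sub_mul, mul_assoc]
  have hconj : A⁻¹ * H = C * M * B := by
    rw [← hBB, Matrix.mul_inv_rev]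
    simp [M, hC, mul_assoc]
  rw [hsub, B.isUnit.posDef_star_left_conjugate_iff, hM.posDef_one_sub_iff, hconj,
    spectrum.units_conjugate']

theorem PosDef.posDef_sub_iff_sSup_spectrum_lt_one {A H : Matrix n n 𝕜} (hA : A.PosDef)
    (hH : H.IsHermitian) : (A - H).PosDef ↔ sSup (spectrum ℝ (A⁻¹ * H)) < 1 := by
  rw [hA.posDef_sub_iff hH]
  rcases (spectrum ℝ (A⁻¹ * H)).eq_empty_or_nonempty with h | h
  · simp [h] -- `sSup ∅ = 0`
  · exact (finite_real_spectrum.csSup_lt_iff h).symm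

theorem PosDef.posDef_sub_smul_iff {A H : Matrix n n 𝕜} (hA : A.PosDef) (hH : H.IsHermitian)
    {c : ℝ} (hc : 0 < c) : (A - c • H).PosDef ↔ c * sSup (spectrum ℝ (A⁻¹ * H)) < 1 := by
  have hspec : spectrum ℝ (A⁻¹ * (c • H)) = c • spectrum ℝ (A⁻¹ * H) := by
    rw [mul_smul_comm]
    exact spectrum.unit_smul_eq_smul _ (Units.mk0 c hc.ne')
  rw [hA.posDef_sub_iff_sSup_spectrum_lt_one (hH.smul (.all c)), hspec,
    Real.sSup_smul_of_nonneg hc.le, smul_eq_mul]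

end Matrix

theorem stmt8_general (N m : ℕ) (W : Matrix (Fin N) (Fin N) ℝ)
    (hlow : (W + 1).PosDef)
    (Htil : Matrix (Fin N × Fin m) (Fin N × Fin m) ℝ) (hH : Htil.PosSemidef)
    (α : ℝ) (hα : 0 < α) :
    ((((W + 1) ^ 2) ⊗ₖ (1 : Matrix (Fin m) (Fin m) ℝ)) - (2 * α) • Htil).PosDef ↔
      2 * α * sSup (spectrum ℝ
        (((((1 : Matrix (Fin N) (Fin N) ℝ) + W) ^ 2)⁻¹ ⊗ₖ (1 : Matrix (Fin m) (Fin m) ℝ)) * Htil)) < 1 := by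
  have hsq : ((W + 1) ^ 2).PosDef := by
    have h := PosDef.conjTranspose_mul_self (W + 1) (mulVec_injective_of_isUnit hlow.isUnit)
    rwa [hlow.isHermitian.eq, ← sq] at h
  have hinv : ((1 + W) ^ 2)⁻¹ ⊗ₖ (1 : Matrix (Fin m) (Fin m) ℝ)
      = (((W + 1) ^ 2) ⊗ₖ (1 : Matrix (Fin m) (Fin m) ℝ))⁻¹ := by
    rw [inv_kronecker, inv_one, add_comm]
  rw [hinv]
  exact (hsq.kronecker .one).posDef_sub_smul_iff hH.isHermitian (by positivity)

/-- `(W+I)²⊗I_m − 2αH̃` is positive definite iff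
`2α·λ_max(((I+W)⁻²⊗I_m)H̃) < 1`, i.e. `α < 1/(2λ_max(((I+W)⁻²⊗I_m)H̃))`. -/
theorem stmt8 (N m : ℕ) (W : Matrix (Fin N) (Fin N) ℝ) (hsymm : W.IsSymm)
    (hlow : (W + 1).PosDef) (hup : ((1 : Matrix (Fin N) (Fin N) ℝ) - W).PosSemidef)
    (Htil : Matrix (Fin N × Fin m) (Fin N × Fin m) ℝ) (hH : Htil.PosSemidef)
    (α : ℝ) (hα : 0 < α) :
    ((((W + 1) ^ 2) ⊗ₖ (1 : Matrix (Fin m) (Fin m) ℝ)) - (2 * α) • Htil).PosDef ↔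
      2 * α * sSup (spectrum ℝ
        (((((1 : Matrix (Fin N) (Fin N) ℝ) + W) ^ 2)⁻¹ ⊗ₖ (1 : Matrix (Fin m) (Fin m) ℝ)) * Htil)) < 1 :=
  stmt8_general N m W hlow Htil hH α hα
end

section
/- Let W be a symmetric doubly stochastic matrix with positive diagonal associated to a connected graph, H̃ = diag(h₁h₁ᵀ,…,h_N h_Nᵀ) with H = [h₁ … h_N]ᵀ of full column rank m, and α > 0. Consider the 2Nm×2Nm matrix M = [[W⊗I_m, −αI_{Nm}], [−H̃((I_N−W)⊗I_m), W⊗I_m − αH̃]]. Then 1 is an eigenvalue of M with geometric multiplicity exactly m, and its eigenspace is { ((1_N ⊗ c)ᵀ, 0ᵀ)ᵀ : c ∈ ℝ^m }. -/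
open Matrix Kronecker

/-- Fixed vectors of a nonnegative symmetric row-stochastic connected matrix are constant. -/
lemma stmt9_eig_const {N : ℕ} (W : Matrix (Fin N) (Fin N) ℝ) (hsymm : W.IsSymm)
    (hnonneg : ∀ i j, 0 ≤ W i j) (hrow : W *ᵥ (fun _ => 1) = fun _ => 1)
    (hconn : (SimpleGraph.fromRel (fun i j : Fin N => 0 < W i j)).Connected)
    (x : Fin N → ℝ) (hx : W *ᵥ x = x) (i j : Fin N) : x i = x j := by
  have hne : Nonempty (Fin N) := hconn.nonempty
  obtain ⟨i₀, hi₀⟩ := Finite.exists_max x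
  have hrowsum : ∀ i, ∑ k, W i k = 1 := by
    intro i
    have := congrFun hrow i
    simpa [Matrix.mulVec, dotProduct] using this
  have step : ∀ a b : Fin N, 0 < W a b → x a = x i₀ → x b = x i₀ := by
    intro a b hW ha
    have hsum : ∑ k, W a k * (x i₀ - x k) = 0 := by
      have h1 : ∑ k, W a k * x k = x a := by
        have := congrFun hx a
        simpa [Matrix.mulVec, dotProduct] using this
      have h2 : ∑ k, W a k * (x i₀ - x k) = (∑ k, W a k) * x i₀ - ∑ k, W a k * x k := by
        rw [Finset.sum_mul, ← Finset.sum_sub_distrib]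
        congr 1; ext k; ring
      rw [h2, hrowsum, h1, ha]; ring
    have hterm : ∀ k ∈ Finset.univ, (0:ℝ) ≤ W a k * (x i₀ - x k) := by
      intro k _
      exact mul_nonneg (hnonneg a k) (by linarith [hi₀ k])
    have := (Finset.sum_eq_zero_iff_of_nonneg hterm).mp hsum b (Finset.mem_univ b)
    rcases mul_eq_zero.mp this with h | h
    · exact absurd h (ne_of_gt hW)
    · linarith [hi₀ b]
  have key : ∀ a b : Fin N, (SimpleGraph.fromRel (fun i j : Fin N => 0 < W i j)).Walk a b →
      x a = x i₀ → x b = x i₀ := by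
    intro a b w
    induction w with
    | nil => exact fun h => h
    | cons h p ih =>
      rename_i u v' w'
      intro ha
      apply ih
      simp only [SimpleGraph.fromRel_adj] at h
      rcases h.2 with hW | hW
      · exact step _ _ hW ha
      · have : W u v' = W v' u := (hsymm.apply v' u)
        exact step _ _ (by rw [this]; exact hW) ha
  have k1 : x i = x i₀ := key i₀ i ((hconn i₀ i).some) rfl
  have k2 : x j = x i₀ := key i₀ j ((hconn i₀ j).some) rfl
  rw [k1, k2]

lemma stmt9_kron_mulVec {N m : ℕ} (W : Matrix (Fin N) (Fin N) ℝ)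
    (v : Fin N × Fin m → ℝ) (i : Fin N) (a : Fin m) :
    ((W ⊗ₖ (1 : Matrix (Fin m) (Fin m) ℝ)) *ᵥ v) (i, a) = ∑ j, W i j * v (j, a) := by
  simp [Matrix.mulVec, dotProduct, Fintype.sum_prod_type, Matrix.one_apply,
    mul_ite, ite_mul, mul_assoc]

/-- Fixed vectors of `W ⊗ₖ 1` are constant in the first coordinate. -/
lemma stmt9_kron_fixed {N m : ℕ} (W : Matrix (Fin N) (Fin N) ℝ) (hsymm : W.IsSymm)
    (hnonneg : ∀ i j, 0 ≤ W i j) (hrow : W *ᵥ (fun _ => 1) = fun _ => 1)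
    (hconn : (SimpleGraph.fromRel (fun i j : Fin N => 0 < W i j)).Connected)
    (v : Fin N × Fin m → ℝ)
    (hv : (W ⊗ₖ (1 : Matrix (Fin m) (Fin m) ℝ)) *ᵥ v = v) :
    ∃ c : Fin m → ℝ, v = fun p => c p.2 := by
  have hne : Nonempty (Fin N) := hconn.nonempty
  obtain ⟨i₀⟩ := hne
  refine ⟨fun a => v (i₀, a), ?_⟩
  funext p
  obtain ⟨i, a⟩ := p
  have hxa : W *ᵥ (fun j => v (j, a)) = fun j => v (j, a) := by
    funext j
    have := congrFun hv (j, a)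
    rw [stmt9_kron_mulVec] at this
    simpa [Matrix.mulVec, dotProduct] using this
  exact stmt9_eig_const W hsymm hnonneg hrow hconn _ hxa i i₀

/-- For undirected graphs, `1` is an eigenvalue of `M` with geometric multiplicity `m`,
and its eigenspace is `{ (1_N ⊗ c, 0) : c ∈ ℝ^m }`. -/
theorem stmt9 (N m : ℕ) (H : Matrix (Fin N) (Fin m) ℝ) (hrank : H.rank = m)
    (W : Matrix (Fin N) (Fin N) ℝ) (hsymm : W.IsSymm)
    (hnonneg : ∀ i j, 0 ≤ W i j) (hrow : W *ᵥ (fun _ => 1) = fun _ => 1)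
    (hdiag : ∀ i, 0 < W i i)
    (hconn : (SimpleGraph.fromRel (fun i j : Fin N => 0 < W i j)).Connected)
    (α : ℝ) (hα : 0 < α)
    (Htil : Matrix (Fin N × Fin m) (Fin N × Fin m) ℝ)
    (hHtil : ∀ i j a b, Htil (i, a) (j, b) = if i = j then H i a * H i b else 0)
    (M : Matrix ((Fin N × Fin m) ⊕ (Fin N × Fin m)) ((Fin N × Fin m) ⊕ (Fin N × Fin m)) ℝ)
    (hM : M = Matrix.fromBlocks (W ⊗ₖ (1 : Matrix (Fin m) (Fin m) ℝ)) (-α • 1)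
        (-(Htil * ((1 - W) ⊗ₖ (1 : Matrix (Fin m) (Fin m) ℝ))))
        (W ⊗ₖ (1 : Matrix (Fin m) (Fin m) ℝ) - α • Htil)) :
    ({v : (Fin N × Fin m) ⊕ (Fin N × Fin m) → ℝ | M *ᵥ v = v} =
      {v | ∃ c : Fin m → ℝ, v = Sum.elim (fun p => c p.2) (fun _ => 0)}) ∧
    Module.finrank ℝ (LinearMap.ker (Matrix.toLin' (M - 1))) = m := by
  have hne : Nonempty (Fin N) := hconn.nonempty
  obtain ⟨i₀⟩ := hne
  set A : Matrix (Fin N × Fin m) (Fin N × Fin m) ℝ := W ⊗ₖ (1 : Matrix (Fin m) (Fin m) ℝ)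
    with hA
  have hrowsum : ∀ i, ∑ k, W i k = 1 := by
    intro i
    have := congrFun hrow i
    simpa [Matrix.mulVec, dotProduct] using this
  have hcolsum : ∀ j, ∑ i, W i j = 1 := by
    intro j
    have : ∀ i, W i j = W j i := fun i => hsymm.apply j i
    simp_rw [this]
    exact hrowsum j
  -- A applied to a constant-in-first-coordinate vector
  have hAconst : ∀ c : Fin m → ℝ, A *ᵥ (fun p : Fin N × Fin m => c p.2) = fun p => c p.2 := by
    intro c
    funext p
    obtain ⟨i, a⟩ := p
    rw [hA, stmt9_kron_mulVec]
    simp [← Finset.sum_mul, hrowsum]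
  have hsub : (1 - W) ⊗ₖ (1 : Matrix (Fin m) (Fin m) ℝ) = 1 - A := by
    ext p q
    obtain ⟨i, a⟩ := p
    obtain ⟨j, b⟩ := q
    simp only [hA, Matrix.kroneckerMap_apply, Matrix.sub_apply, Matrix.one_apply,
      Prod.mk.injEq]
    by_cases hab : a = b <;> by_cases hij : i = j <;> simp [hab, hij, sub_mul]
  -- The set equality
  have hset : {v : (Fin N × Fin m) ⊕ (Fin N × Fin m) → ℝ | M *ᵥ v = v} =
      {v | ∃ c : Fin m → ℝ, v = Sum.elim (fun p => c p.2) (fun _ => 0)} := by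
    ext v
    simp only [Set.mem_setOf_eq]
    constructor
    · intro hv
      set x : Fin N × Fin m → ℝ := fun p => v (Sum.inl p) with hxdef
      set y : Fin N × Fin m → ℝ := fun p => v (Sum.inr p) with hydef
      have hvxy : v = Sum.elim x y := by
        funext p; cases p <;> rfl
      rw [hvxy, hM, Matrix.fromBlocks_mulVec] at hv
      have eq1 : A *ᵥ x + (-α • (1 : Matrix (Fin N × Fin m) (Fin N × Fin m) ℝ)) *ᵥ y = x := by
        funext p; exact congrFun hv (Sum.inl p)
      have eq2 : (-(Htil * ((1 - W) ⊗ₖ (1 : Matrix (Fin m) (Fin m) ℝ)))) *ᵥ x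
          + (A - α • Htil) *ᵥ y = y := by
        funext p; exact congrFun hv (Sum.inr p)
      rw [Matrix.smul_mulVec, Matrix.one_mulVec] at eq1
      -- eq1 : A *ᵥ x + (-α) • y = x, hence α • y = A *ᵥ x - x
      have eq1' : α • y = A *ᵥ x - x := by
        have := eq1
        funext p
        have h := congrFun this p
        simp only [Pi.add_apply, Pi.smul_apply, Pi.sub_apply, Pi.neg_apply,
          smul_eq_mul, neg_smul] at h ⊢
        linarith [h]
      -- simplify eq2 to A *ᵥ y = y
      have hAy : A *ᵥ y = y := by
        rw [hsub, Matrix.neg_mulVec, ← Matrix.mulVec_mulVec, Matrix.sub_mulVec,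
          Matrix.sub_mulVec, Matrix.one_mulVec] at eq2
        have hsm : (α • Htil) *ᵥ y = Htil *ᵥ (α • y) := by
          rw [Matrix.smul_mulVec, Matrix.mulVec_smul]
        rw [hsm, eq1'] at eq2
        simp only [Matrix.mulVec_sub] at eq2
        funext p
        have h := congrFun eq2 p
        simp only [Pi.add_apply, Pi.sub_apply, Pi.neg_apply] at h ⊢
        linarith [h]
      obtain ⟨c, hc⟩ := stmt9_kron_fixed W hsymm hnonneg hrow hconn y hAy
      -- column sum argument: sums of (A *ᵥ x - x) over first index vanish
      have hzero : ∀ a : Fin m, c a = 0 := by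
        intro a
        have hsum0 : ∑ i, (A *ᵥ x - x) (i, a) = 0 := by
          have h1 : ∑ i, (A *ᵥ x) (i, a) = ∑ j, x (j, a) := by
            simp_rw [hA, stmt9_kron_mulVec]
            rw [Finset.sum_comm]
            congr 1; ext j
            rw [← Finset.sum_mul, hcolsum, one_mul]
          calc ∑ i, (A *ᵥ x - x) (i, a) = ∑ i, (A *ᵥ x) (i, a) - ∑ i, x (i, a) := by
                rw [← Finset.sum_sub_distrib]; rfl
            _ = 0 := by rw [h1, sub_self]
        have hsum1 : ∑ i : Fin N, (α • y) (i, a) = 0 := by rw [eq1']; exact hsum0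
        have : (N : ℝ) * (α * c a) = 0 := by
          have := hsum1
          simp only [hc, Pi.smul_apply, smul_eq_mul] at this
          simpa [Finset.sum_const, Finset.card_univ, mul_comm] using this
        have hN : (N : ℝ) ≠ 0 := by
          have hN' : (0 : ℝ) < N := by exact_mod_cast i₀.pos
          exact ne_of_gt hN'
        rcases mul_eq_zero.mp this with h | h
        · exact absurd h hN
        · rcases mul_eq_zero.mp h with h' | h'
          · exact absurd h' (ne_of_gt hα)
          · exact h'
      have hy0 : y = 0 := by
        funext p
        rw [hc]
        exact hzero p.2
      have hAx : A *ᵥ x = x := by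
        have : α • y = 0 := by rw [hy0]; simp
        rw [this] at eq1'
        have := eq1'.symm
        funext p
        have h := congrFun this p
        simp only [Pi.sub_apply, Pi.zero_apply] at h
        linarith [h]
      obtain ⟨c', hc'⟩ := stmt9_kron_fixed W hsymm hnonneg hrow hconn x hAx
      refine ⟨c', ?_⟩
      rw [hvxy, hc', hy0]
      funext p; cases p <;> rfl
    · rintro ⟨c, rfl⟩
      have h0 : (Sum.elim (fun p : Fin N × Fin m => c p.2) (fun _ : Fin N × Fin m => (0:ℝ)))
          = Sum.elim (fun p : Fin N × Fin m => c p.2) (0 : Fin N × Fin m → ℝ) := by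
        funext p; cases p <;> rfl
      rw [h0, hM, Matrix.fromBlocks_mulVec]
      simp only [Sum.elim_comp_inl, Sum.elim_comp_inr]
      have hBx : (-(Htil * ((1 - W) ⊗ₖ (1 : Matrix (Fin m) (Fin m) ℝ)))) *ᵥ
          (fun p : Fin N × Fin m => c p.2) = 0 := by
        rw [hsub, Matrix.neg_mulVec, ← Matrix.mulVec_mulVec, Matrix.sub_mulVec,
          Matrix.one_mulVec, hAconst, sub_self, Matrix.mulVec_zero, neg_zero]
      rw [hAconst, hBx, Matrix.mulVec_zero, Matrix.mulVec_zero, add_zero, add_zero]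
  refine ⟨hset, ?_⟩
  -- dimension count
  let φ : (Fin m → ℝ) →ₗ[ℝ] (((Fin N × Fin m) ⊕ (Fin N × Fin m)) → ℝ) :=
    { toFun := fun c => Sum.elim (fun p => c p.2) (fun _ => 0)
      map_add' := by intro c₁ c₂; funext p; cases p <;> simp
      map_smul' := by intro r c; funext p; cases p <;> simp }
  have hker : LinearMap.ker (Matrix.toLin' (M - 1)) = LinearMap.range φ := by
    ext v
    simp only [LinearMap.mem_ker, Matrix.toLin'_apply, LinearMap.mem_range]
    rw [Matrix.sub_mulVec, Matrix.one_mulVec, sub_eq_zero]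
    constructor
    · intro h
      obtain ⟨c, hc⟩ := (Set.ext_iff.mp hset v).mp h
      exact ⟨c, hc.symm⟩
    · rintro ⟨c, hc⟩
      exact (Set.ext_iff.mp hset v).mpr ⟨c, hc.symm⟩
  rw [hker]
  have hinj : Function.Injective φ := by
    intro c₁ c₂ h
    funext a
    exact congrFun h (Sum.inl (i₀, a))
  rw [LinearMap.finrank_range_of_inj hinj]
  simp
end

section
/- Under the same assumptions (W symmetric doubly stochastic with positive diagonal on a connected graph, H of full column rank, α > 0), the algebraic multiplicity of the eigenvalue 1 of the matrix M equals its geometric multiplicity m; i.e., 1 is a semisimple eigenvalue of M of multiplicity m. -/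
open Matrix Kronecker

lemma maxprin {N : ℕ} (W : Matrix (Fin N) (Fin N) ℝ) (hsymm : W.IsSymm)
    (hnonneg : ∀ i j, 0 ≤ W i j) (hrow : W *ᵥ (fun _ => 1) = fun _ => 1)
    (hconn : (SimpleGraph.fromRel (fun i j : Fin N => 0 < W i j)).Connected)
    (v : Fin N → ℝ) (hv : W *ᵥ v = v) (i j : Fin N) : v i = v j := by
  have hne : Nonempty (Fin N) := hconn.nonempty
  have hNE : (Finset.univ : Finset (Fin N)).Nonempty := Finset.univ_nonempty
  set c := Finset.univ.sup' hNE v with hc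
  have hle : ∀ k, v k ≤ c := fun k => Finset.le_sup' v (Finset.mem_univ k)
  have hrow' : ∀ i, ∑ k, W i k = 1 := by
    intro i
    have := congrFun hrow i
    simpa [Matrix.mulVec, dotProduct] using this
  have step : ∀ i j, v i = c → 0 < W i j → v j = c := by
    intro i j hvi hW
    by_contra hne'
    have hlt : v j < c := lt_of_le_of_ne (hle j) hne'
    have h1 : ∑ k, W i k * v k < ∑ k, W i k * c := by
      apply Finset.sum_lt_sum
      · intro k _; exact mul_le_mul_of_nonneg_left (hle k) (hnonneg i k)
      · exact ⟨j, Finset.mem_univ j, by nlinarith⟩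
    have h2 : ∑ k, W i k * c = c := by
      rw [← Finset.sum_mul, hrow' i, one_mul]
    have h3 : (W *ᵥ v) i = ∑ k, W i k * v k := by
      simp [Matrix.mulVec, dotProduct]
    rw [hv, hvi] at h3
    linarith [h3 ▸ h1, h2]
  have walkstep : ∀ a b : Fin N,
      (SimpleGraph.fromRel (fun i j : Fin N => 0 < W i j)).Walk a b → v a = c → v b = c := by
    intro a b w
    induction w with
    | nil => exact id
    | @cons u x w hadj p ih =>
      intro ha
      rcases hadj with ⟨hne2, h | h⟩
      · exact ih (step u x ha h)
      · have h' : W x u = W u x := hsymm.apply u x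
        exact ih (step u x ha (h' ▸ h))
  have hall : ∀ k, v k = c := by
    obtain ⟨i0, _, hi0⟩ := Finset.exists_mem_eq_sup' hNE v
    intro k
    obtain ⟨w⟩ := hconn.preconnected i0 k
    exact walkstep i0 k w hi0.symm
  rw [hall i, hall j]


section
variable {N m : ℕ} (W : Matrix (Fin N) (Fin N) ℝ) (H : Matrix (Fin N) (Fin m) ℝ)
  (Htil : Matrix (Fin N × Fin m) (Fin N × Fin m) ℝ)

lemma kron_mulVec (x : Fin N × Fin m → ℝ) (i : Fin N) (a : Fin m) :
    ((W ⊗ₖ (1 : Matrix (Fin m) (Fin m) ℝ)) *ᵥ x) (i, a) = ∑ j, W i j * x (j, a) := by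
  simp only [Matrix.mulVec, dotProduct, Fintype.sum_prod_type,
    Matrix.kroneckerMap_apply, Matrix.one_apply, mul_ite, mul_one, mul_zero, ite_mul, zero_mul]
  simp [Finset.sum_ite_eq, mul_assoc]

lemma Htil_mulVec (hHtil : ∀ i j a b, Htil (i, a) (j, b) = if i = j then H i a * H i b else 0)
    (x : Fin N × Fin m → ℝ) (i : Fin N) (a : Fin m) :
    (Htil *ᵥ x) (i, a) = H i a * ∑ b, H i b * x (i, b) := by
  simp only [Matrix.mulVec, dotProduct, Fintype.sum_prod_type]
  rw [Finset.mul_sum]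
  rw [Finset.sum_eq_single i]
  · apply Finset.sum_congr rfl; intro b _; rw [hHtil]; simp [mul_assoc]
  · intro j _ hj
    apply Finset.sum_eq_zero; intro b _; rw [hHtil]; simp [Ne.symm hj, (fun h => hj h.symm : ¬ i = j)]
  · simp

lemma Htil_psd (hHtil : ∀ i j a b, Htil (i, a) (j, b) = if i = j then H i a * H i b else 0)
    (x : Fin N × Fin m → ℝ) :
    x ⬝ᵥ (Htil *ᵥ x) = ∑ i, (∑ b, H i b * x (i, b))^2 := by
  simp only [dotProduct, Fintype.sum_prod_type]
  apply Finset.sum_congr rfl; intro i _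
  rw [sq, Finset.sum_mul_sum]
  rw [Finset.sum_comm]
  apply Finset.sum_congr rfl; intro a _
  rw [Htil_mulVec H Htil hHtil, Finset.mul_sum, Finset.mul_sum]
  apply Finset.sum_congr rfl; intro b _
  ring

lemma H_inj (hrank : H.rank = m) (z : Fin m → ℝ) (hz : H *ᵥ z = 0) : z = 0 := by
  have h1 : LinearMap.ker H.mulVecLin = ⊥ := by
    have h2 := LinearMap.finrank_range_add_finrank_ker H.mulVecLin
    rw [Module.finrank_pi] at h2
    have h3 : Module.finrank ℝ (LinearMap.range H.mulVecLin) = m := by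
      rw [← Matrix.rank]; simpa using hrank
    rw [h3] at h2
    simp only [Fintype.card_fin] at h2
    have h4 : Module.finrank ℝ (LinearMap.ker H.mulVecLin) = 0 := by omega
    exact Submodule.finrank_eq_zero.mp h4
  have : z ∈ LinearMap.ker H.mulVecLin := by simpa [Matrix.mulVecLin] using hz
  rw [h1] at this; simpa using this

end



lemma Mblocks {N m : ℕ} (W : Matrix (Fin N) (Fin N) ℝ) (α : ℝ)
    (Htil : Matrix (Fin N × Fin m) (Fin N × Fin m) ℝ)
    (M : Matrix ((Fin N × Fin m) ⊕ (Fin N × Fin m)) ((Fin N × Fin m) ⊕ (Fin N × Fin m)) ℝ)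
    (hM : M = Matrix.fromBlocks (W ⊗ₖ (1 : Matrix (Fin m) (Fin m) ℝ)) (-α • 1)
        (-(Htil * ((1 - W) ⊗ₖ (1 : Matrix (Fin m) (Fin m) ℝ))))
        (W ⊗ₖ (1 : Matrix (Fin m) (Fin m) ℝ) - α • Htil)) :
    M - 1 = Matrix.fromBlocks (W ⊗ₖ (1 : Matrix (Fin m) (Fin m) ℝ) - 1) (-α • 1)
        (Htil * (W ⊗ₖ (1 : Matrix (Fin m) (Fin m) ℝ) - 1))
        ((W ⊗ₖ (1 : Matrix (Fin m) (Fin m) ℝ) - 1) - α • Htil) := by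
  have hK : ((1 - W) ⊗ₖ (1 : Matrix (Fin m) (Fin m) ℝ)) =
      1 - W ⊗ₖ (1 : Matrix (Fin m) (Fin m) ℝ) := by
    ext ⟨i,a⟩ ⟨j,b⟩
    simp only [Matrix.kroneckerMap_apply, Matrix.sub_apply, Matrix.one_apply, Prod.mk.injEq,
      sub_mul, ite_mul, one_mul, zero_mul]
    by_cases hij : i = j <;> by_cases hab : a = b <;> simp [hij, hab]
  rw [hM, hK, ← Matrix.fromBlocks_one, sub_eq_add_neg, Matrix.fromBlocks_neg,
    Matrix.fromBlocks_add]
  rw [Matrix.fromBlocks_inj]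
  exact ⟨by abel, by simp, by rw [mul_sub, mul_sub, mul_one]; abel, by abel⟩

/-- For undirected graphs, the eigenvalue `1` of `M` is semisimple with
algebraic multiplicity equal to its geometric multiplicity `m`. -/
theorem stmt10 (N m : ℕ) (H : Matrix (Fin N) (Fin m) ℝ) (hrank : H.rank = m)
    (W : Matrix (Fin N) (Fin N) ℝ) (hsymm : W.IsSymm)
    (hnonneg : ∀ i j, 0 ≤ W i j) (hrow : W *ᵥ (fun _ => 1) = fun _ => 1)
    (hdiag : ∀ i, 0 < W i i)
    (hconn : (SimpleGraph.fromRel (fun i j : Fin N => 0 < W i j)).Connected)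
    (α : ℝ) (hα : 0 < α)
    (Htil : Matrix (Fin N × Fin m) (Fin N × Fin m) ℝ)
    (hHtil : ∀ i j a b, Htil (i, a) (j, b) = if i = j then H i a * H i b else 0)
    (M : Matrix ((Fin N × Fin m) ⊕ (Fin N × Fin m)) ((Fin N × Fin m) ⊕ (Fin N × Fin m)) ℝ)
    (hM : M = Matrix.fromBlocks (W ⊗ₖ (1 : Matrix (Fin m) (Fin m) ℝ)) (-α • 1)
        (-(Htil * ((1 - W) ⊗ₖ (1 : Matrix (Fin m) (Fin m) ℝ))))
        (W ⊗ₖ (1 : Matrix (Fin m) (Fin m) ℝ) - α • Htil)) :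
    Module.finrank ℝ (LinearMap.ker (Matrix.toLin' (M - 1))) = m ∧
    (∀ v : (Fin N × Fin m) ⊕ (Fin N × Fin m) → ℝ,
      (M - 1) *ᵥ ((M - 1) *ᵥ v) = 0 → (M - 1) *ᵥ v = 0) := by
  have hne : Nonempty (Fin N) := hconn.nonempty
  obtain ⟨i0⟩ := hne
  set A : Matrix (Fin N × Fin m) (Fin N × Fin m) ℝ :=
    W ⊗ₖ (1 : Matrix (Fin m) (Fin m) ℝ) - 1 with hA
  -- row sums
  have hrow' : ∀ i, ∑ k, W i k = 1 := by
    intro i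
    have := congrFun hrow i
    simpa [Matrix.mulVec, dotProduct] using this
  -- entrywise formula for A
  have hAmul : ∀ (x : Fin N × Fin m → ℝ) (i : Fin N) (a : Fin m),
      (A *ᵥ x) (i, a) = (∑ j, W i j * x (j, a)) - x (i, a) := by
    intro x i a
    rw [hA, Matrix.sub_mulVec, Matrix.one_mulVec]
    simp [kron_mulVec]
  -- block decomposition
  have hblocks : M - 1 = Matrix.fromBlocks A (-α • 1) (Htil * A) (A - α • Htil) := by
    rw [hA]; exact Mblocks W α Htil M hM
  -- master mulVec formula
  have hMv : ∀ (x y : Fin N × Fin m → ℝ),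
      (M - 1) *ᵥ Sum.elim x y =
        Sum.elim (A *ᵥ x - α • y)
          (Htil *ᵥ (A *ᵥ x) + (A *ᵥ y - α • (Htil *ᵥ y))) := by
    intro x y
    have c1 : A *ᵥ x + (-α • 1 : Matrix (Fin N × Fin m) (Fin N × Fin m) ℝ) *ᵥ y
        = A *ᵥ x - α • y := by
      simp only [Matrix.neg_mulVec, Matrix.smul_mulVec, Matrix.one_mulVec, neg_smul]
      abel
    have c2 : (Htil * A) *ᵥ x + (A - α • Htil) *ᵥ y
        = Htil *ᵥ (A *ᵥ x) + (A *ᵥ y - α • (Htil *ᵥ y)) := by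
      rw [← Matrix.mulVec_mulVec, Matrix.sub_mulVec A (α • Htil) y, Matrix.smul_mulVec]
    rw [hblocks, Matrix.fromBlocks_mulVec]
    simp only [Sum.elim_comp_inl, Sum.elim_comp_inr]
    rw [c1, c2]
  -- A symmetric
  have hAsymm : Aᵀ = A := by
    rw [hA, Matrix.transpose_sub, Matrix.transpose_one]
    congr 1
    rw [← Matrix.kroneckerMap_transpose]
    rw [hsymm.eq, Matrix.transpose_one]
  have hdot : ∀ (p q : Fin N × Fin m → ℝ), p ⬝ᵥ (A *ᵥ q) = (A *ᵥ p) ⬝ᵥ q := by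
    intro p q
    rw [Matrix.dotProduct_mulVec, ← Matrix.mulVec_transpose, hAsymm]
  -- kernel ∩ image trivial
  have hkerim : ∀ (y q : Fin N × Fin m → ℝ), A *ᵥ y = 0 → y = A *ᵥ q → y = 0 := by
    intro y q hy hq
    have h1 : y ⬝ᵥ y = 0 := by
      nth_rewrite 1 [hq]
      rw [← hdot, hy, dotProduct_zero]
    exact (dotProduct_self_eq_zero).mp h1
  -- kernel of A consists of constant-in-first-coordinate vectors
  have hkerA : ∀ (x : Fin N × Fin m → ℝ), A *ᵥ x = 0 →
      ∀ i j a, x (i, a) = x (j, a) := by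
    intro x hx i j a
    have hv : W *ᵥ (fun i => x (i, a)) = fun i => x (i, a) := by
      funext i
      have := congrFun hx (i, a)
      rw [hAmul] at this
      simpa [Matrix.mulVec, dotProduct, sub_eq_zero] using this
    exact maxprin W hsymm hnonneg hrow hconn _ hv i j
  -- constants are in kernel of A
  have hconst : ∀ (z : Fin m → ℝ), A *ᵥ (fun p => z p.2) = 0 := by
    intro z
    funext ⟨i, a⟩
    rw [hAmul]
    simp only
    rw [← Finset.sum_mul]
    rw [hrow' i, one_mul, sub_self]
    rfl
  -- kernel characterization
  have hker : ∀ (x y : Fin N × Fin m → ℝ),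
      (M - 1) *ᵥ Sum.elim x y = 0 ↔ (A *ᵥ x = α • y ∧ A *ᵥ y = 0) := by
    intro x y
    rw [hMv]
    constructor
    · intro h
      have e1 : A *ᵥ x - α • y = 0 := funext fun p => congrFun h (Sum.inl p)
      have e2 : Htil *ᵥ (A *ᵥ x) + (A *ᵥ y - α • (Htil *ᵥ y)) = 0 :=
        funext fun p => congrFun h (Sum.inr p)
      have e1' : A *ᵥ x = α • y := by rwa [sub_eq_zero] at e1
      refine ⟨e1', ?_⟩
      rw [e1', Matrix.mulVec_smul] at e2
      rw [add_comm, sub_add_cancel] at e2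
      exact e2
    · rintro ⟨h1, h2⟩
      funext s
      cases s with
      | inl p => simp [h1]
      | inr p => simp [h1, h2, Matrix.mulVec_smul]
  -- y in ker → y = 0 step packaged
  have hy0 : ∀ (x y : Fin N × Fin m → ℝ), A *ᵥ x = α • y → A *ᵥ y = 0 → y = 0 := by
    intro x y h1 h2
    refine hkerim y (α⁻¹ • x) h2 ?_
    rw [Matrix.mulVec_smul, h1, smul_smul, inv_mul_cancel₀ (ne_of_gt hα), one_smul]
  constructor
  · -- dimension of kernel
    set L := Matrix.toLin' (M - 1) with hL
    have hmemiff : ∀ v, v ∈ LinearMap.ker L ↔ (M - 1) *ᵥ v = 0 := by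
      intro v
      rw [LinearMap.mem_ker, hL, Matrix.toLin'_apply]
    let ψ : (Fin m → ℝ) →ₗ[ℝ] ((Fin N × Fin m) ⊕ (Fin N × Fin m) → ℝ) :=
      { toFun := fun z => Sum.elim (fun p => z p.2) 0
        map_add' := by intro a b; funext s; cases s <;> simp
        map_smul' := by intro r a; funext s; cases s <;> simp }
    have hψmem : ∀ z, ψ z ∈ LinearMap.ker L := by
      intro z
      rw [hmemiff]
      show (M - 1) *ᵥ Sum.elim (fun p => z p.2) 0 = 0
      rw [hker]
      exact ⟨by rw [hconst]; simp, by simp⟩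
    let φ : (Fin m → ℝ) →ₗ[ℝ] ↥(LinearMap.ker L) := ψ.codRestrict _ hψmem
    have hinj : Function.Injective φ := by
      intro a b hab
      have : ψ a = ψ b := congrArg Subtype.val hab
      funext c
      exact congrFun this (Sum.inl (i0, c))
    have hsurj : Function.Surjective φ := by
      rintro ⟨v, hv⟩
      rw [hmemiff] at hv
      have hv' : (M - 1) *ᵥ Sum.elim (v ∘ Sum.inl) (v ∘ Sum.inr) = 0 := by
        rwa [Sum.elim_comp_inl_inr]
      rw [hker] at hv'
      obtain ⟨h1, h2⟩ := hv'
      have hy := hy0 _ _ h1 h2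
      have hx : A *ᵥ (v ∘ Sum.inl) = 0 := by rw [h1, hy, smul_zero]
      refine ⟨fun a => v (Sum.inl (i0, a)), ?_⟩
      apply Subtype.ext
      show ψ _ = v
      funext s
      cases s with
      | inl p =>
        show v (Sum.inl (i0, p.2)) = v (Sum.inl p)
        have := hkerA _ hx i0 p.1 p.2
        simpa using this
      | inr p =>
        show (0 : ℝ) = v (Sum.inr p)
        exact (congrFun hy p).symm
    have e := LinearEquiv.ofBijective φ ⟨hinj, hsurj⟩
    rw [← e.finrank_eq]
    simp [Module.finrank_pi]
  · -- semisimplicity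
    intro v hvv
    set p : (Fin N × Fin m) ⊕ (Fin N × Fin m) → ℝ := (M - 1) *ᵥ v with hp
    have hpelim : (M - 1) *ᵥ Sum.elim (p ∘ Sum.inl) (p ∘ Sum.inr) = 0 := by
      rw [Sum.elim_comp_inl_inr]; exact hvv
    rw [hker] at hpelim
    obtain ⟨h1, h2⟩ := hpelim
    have hpy : (p ∘ Sum.inr) = 0 := hy0 _ _ h1 h2
    have hpx0 : A *ᵥ (p ∘ Sum.inl) = 0 := by rw [h1, hpy, smul_zero]
    -- relate p to v
    have hvelim : p = Sum.elim (A *ᵥ (v ∘ Sum.inl) - α • (v ∘ Sum.inr))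
        (Htil *ᵥ (A *ᵥ (v ∘ Sum.inl)) +
          (A *ᵥ (v ∘ Sum.inr) - α • (Htil *ᵥ (v ∘ Sum.inr)))) := by
      rw [hp, ← hMv, Sum.elim_comp_inl_inr]
    have heq1 : A *ᵥ (v ∘ Sum.inl) - α • (v ∘ Sum.inr) = p ∘ Sum.inl := by
      funext q; exact (congrFun hvelim (Sum.inl q)).symm
    have heq2 : Htil *ᵥ (A *ᵥ (v ∘ Sum.inl)) +
        (A *ᵥ (v ∘ Sum.inr) - α • (Htil *ᵥ (v ∘ Sum.inr))) = 0 := by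
      funext q
      have h := congrFun hvelim (Sum.inr q)
      simp only [Sum.elim_inr] at h
      rw [← h]
      exact congrFun hpy q
    -- derive A w = -(Htil px)
    have hAw : A *ᵥ (v ∘ Sum.inr) = -(Htil *ᵥ (p ∘ Sum.inl)) := by
      have hsub : α • (v ∘ Sum.inr) = A *ᵥ (v ∘ Sum.inl) - p ∘ Sum.inl := by
        rw [← heq1]; abel
      have h3 : Htil *ᵥ (α • (v ∘ Sum.inr)) =
          Htil *ᵥ (A *ᵥ (v ∘ Sum.inl)) - Htil *ᵥ (p ∘ Sum.inl) := by
        rw [hsub, Matrix.mulVec_sub]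
      rw [Matrix.mulVec_smul] at h3
      have h4 := heq2
      rw [h3] at h4
      have h5 : A *ᵥ (v ∘ Sum.inr) + Htil *ᵥ (p ∘ Sum.inl) = 0 := by
        rw [← h4]; abel
      exact eq_neg_of_add_eq_zero_left h5
    -- px ⬝ Htil px = 0
    have hquad : (p ∘ Sum.inl) ⬝ᵥ (Htil *ᵥ (p ∘ Sum.inl)) = 0 := by
      rw [show Htil *ᵥ (p ∘ Sum.inl) = -(A *ᵥ (v ∘ Sum.inr)) from by rw [hAw]; simp]
      rw [dotProduct_neg, hdot, hpx0, zero_dotProduct, neg_zero]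
    -- each row combination vanishes
    have hrows : ∀ i, ∑ b, H i b * (p ∘ Sum.inl) (i, b) = 0 := by
      intro i
      have hq := hquad
      rw [Htil_psd H Htil hHtil] at hq
      have hz := (Finset.sum_eq_zero_iff_of_nonneg
        (fun i _ => sq_nonneg (∑ b, H i b * (p ∘ Sum.inl) (i, b)))).mp hq
      have := hz i (Finset.mem_univ i)
      exact (pow_eq_zero_iff two_ne_zero).mp this
    -- conclude px = 0
    have hpx : (p ∘ Sum.inl) = 0 := by
      set z : Fin m → ℝ := fun a => (p ∘ Sum.inl) (i0, a) with hz
      have hconst' : ∀ i a, (p ∘ Sum.inl) (i, a) = z a := by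
        intro i a
        exact hkerA _ hpx0 i i0 a
      have hHz : H *ᵥ z = 0 := by
        funext i
        have := hrows i
        simp only [Matrix.mulVec, dotProduct, Pi.zero_apply]
        rw [← this]
        apply Finset.sum_congr rfl
        intro b _
        rw [hconst' i b]
      have hz0 := H_inj H hrank z hHz
      funext q
      have := hconst' q.1 q.2
      rw [hz0] at this
      simpa using this
    -- finish
    funext s
    cases s with
    | inl q => exact congrFun hpx q
    | inr q => exact congrFun hpy q
end

section
/- Let P be an N×N row-stochastic matrix and Q an N×N column-stochastic matrix, both with positive diagonals, whose support graphs correspond to a strongly connected directed graph; let H have full column rank m, H̃ = diag(h₁h₁ᵀ,…,h_Nh_Nᵀ), and α > 0. Then for M = [[P⊗I_m, −αI_{Nm}], [−H̃((I_N−P)⊗I_m), Q⊗I_m − αH̃]], the eigenvalue 1 of M has algebraic multiplicity equal to geometric multiplicity equal to m. -/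
open Matrix Kronecker

variable {N m : ℕ}

/-- powers of an entrywise-nonneg matrix are entrywise nonneg -/
lemma pownn (A : Matrix (Fin N) (Fin N) ℝ) (h : ∀ i j, 0 ≤ A i j) (k : ℕ) :
    ∀ i j, 0 ≤ (A ^ k) i j := by
  induction k with
  | zero => intro i j; simp [Matrix.one_apply]; positivity
  | succ k ih =>
      intro i j
      rw [pow_succ, Matrix.mul_apply]
      exact Finset.sum_nonneg fun t _ => mul_nonneg (ih i t) (h t j)

lemma powrow (A : Matrix (Fin N) (Fin N) ℝ) (h : A *ᵥ (fun _ => 1) = fun _ => 1) (k : ℕ) :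
    (A ^ k) *ᵥ (fun _ => 1) = fun _ => 1 := by
  induction k with
  | zero => simp
  | succ k ih => rw [pow_succ, ← Matrix.mulVec_mulVec, h, ih]

lemma powcol (A : Matrix (Fin N) (Fin N) ℝ) (h : (fun _ => 1) ᵥ* A = fun _ => 1) (k : ℕ) :
    (fun _ => (1:ℝ)) ᵥ* (A ^ k) = fun _ => 1 := by
  induction k with
  | zero => simp
  | succ k ih => rw [pow_succ, ← Matrix.vecMul_vecMul, ih, h]

/-- support transfer for powers -/
lemma powsupp (A B : Matrix (Fin N) (Fin N) ℝ) (hA : ∀ i j, 0 ≤ A i j)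
    (hB : ∀ i j, 0 ≤ B i j) (hAB : ∀ i j, 0 < A i j → 0 < B i j) (k : ℕ) :
    ∀ i j, 0 < (A ^ k) i j → 0 < (B ^ k) i j := by
  induction k with
  | zero =>
      intro i j hij
      simp only [pow_zero] at *
      rcases eq_or_ne i j with rfl | hne
      · simp [Matrix.one_apply]
      · simp [Matrix.one_apply, hne] at hij
  | succ k ih =>
      intro i j hij
      rw [pow_succ, Matrix.mul_apply] at hij
      have hex : ∃ t, 0 < (A ^ k) i t * A t j := by
        by_contra hc
        push_neg at hc
        have hle : ∑ t, (A ^ k) i t * A t j ≤ 0 := Finset.sum_nonpos fun t _ => hc t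
        linarith
      obtain ⟨t, ht⟩ := hex
      have h1 : 0 < (A ^ k) i t := by
        by_contra hc
        push_neg at hc
        have h0 := le_antisymm hc (pownn A hA k i t)
        rw [h0, zero_mul] at ht; exact lt_irrefl _ ht
      have h2 : 0 < A t j := by
        by_contra hc
        push_neg at hc
        have h0 := le_antisymm hc (hA t j)
        rw [h0, mul_zero] at ht; exact lt_irrefl _ ht
      rw [pow_succ, Matrix.mul_apply]
      calc (0:ℝ) < (B ^ k) i t * B t j := mul_pos (ih i t h1) (hAB t j h2)
        _ ≤ ∑ s, (B ^ k) i s * B s j := by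
            apply Finset.single_le_sum (f := fun s => (B ^ k) i s * B s j)
              (fun s _ => mul_nonneg (pownn B hB k i s) (hB s j)) (Finset.mem_univ t)

lemma powfix (A : Matrix (Fin N) (Fin N) ℝ) (x : Fin N → ℝ) (hx : A *ᵥ x = x) (k : ℕ) :
    (A ^ k) *ᵥ x = x := by
  induction k with
  | zero => simp
  | succ k ih => rw [pow_succ', ← Matrix.mulVec_mulVec, ih, hx]

lemma rowsum (A : Matrix (Fin N) (Fin N) ℝ) (h : A *ᵥ (fun _ => 1) = fun _ => 1) (i : Fin N) :
    ∑ j, A i j = 1 := by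
  have := congrFun h i
  simpa [Matrix.mulVec, dotProduct] using this

lemma colsum (A : Matrix (Fin N) (Fin N) ℝ) (h : (fun _ => (1:ℝ)) ᵥ* A = fun _ => 1) (j : Fin N) :
    ∑ i, A i j = 1 := by
  have := congrFun h j
  simpa [Matrix.vecMul, dotProduct] using this

/-- max principle -/
lemma maxprin_s11 (A : Matrix (Fin N) (Fin N) ℝ) (h0 : ∀ i j, 0 ≤ A i j)
    (h1 : A *ᵥ (fun _ => 1) = fun _ => 1) (x : Fin N → ℝ) (hx : A *ᵥ x = x)
    (i : Fin N) (hmax : ∀ j, x j ≤ x i) (j : Fin N) (hij : 0 < A i j) : x j = x i := by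
  have hsum : ∑ t, A i t * (x i - x t) = 0 := by
    have e1 : ∑ t, A i t * x t = x i := by
      have := congrFun hx i
      simpa [Matrix.mulVec, dotProduct] using this
    have e2 : ∑ t, A i t = 1 := rowsum A h1 i
    calc ∑ t, A i t * (x i - x t) = (∑ t, A i t) * x i - ∑ t, A i t * x t := by
          rw [Finset.sum_mul, ← Finset.sum_sub_distrib]; congr 1; ext t; ring
      _ = 0 := by rw [e1, e2]; ring
  have hterm := (Finset.sum_eq_zero_iff_of_nonneg
    (fun t _ => mul_nonneg (h0 i t) (by linarith [hmax t]))).mp hsum j (Finset.mem_univ j)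
  have := mul_eq_zero.mp hterm
  rcases this with h | h
  · exact absurd h (ne_of_gt hij)
  · linarith

/-- eigenvector of row-stochastic sc matrix is constant -/
lemma rowconst (A : Matrix (Fin N) (Fin N) ℝ) (h0 : ∀ i j, 0 ≤ A i j)
    (h1 : A *ᵥ (fun _ => 1) = fun _ => 1) (hsc : ∀ i j, ∃ k, 0 < (A ^ k) i j)
    (x : Fin N → ℝ) (hx : A *ᵥ x = x) : ∀ i j, x i = x j := by
  rcases Nat.eq_zero_or_pos N with rfl | hN
  · intro i; exact absurd i.2 (by omega)
  have : Nonempty (Fin N) := ⟨⟨0, hN⟩⟩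
  obtain ⟨i0, -, hmax⟩ := Finset.exists_max_image Finset.univ x Finset.univ_nonempty
  have key : ∀ j, x j = x i0 := by
    intro j
    obtain ⟨k, hk⟩ := hsc i0 j
    have hxk : (A ^ k) *ᵥ x = x := powfix A x hx k
    exact maxprin_s11 (A ^ k) (pownn A h0 k) (powrow A h1 k) x hxk i0
      (fun t => hmax t (Finset.mem_univ t)) j hk
  intro i j; rw [key i, key j]

/-- positivity propagation -/
lemma perronpos (R : Matrix (Fin N) (Fin N) ℝ) (h0 : ∀ i j, 0 ≤ R i j)
    (hsc : ∀ i j, ∃ k, 0 < (R ^ k) i j) (y : Fin N → ℝ) (hy : R *ᵥ y = y)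
    (hy0 : ∀ i, 0 ≤ y i) (i : Fin N) (hi : 0 < y i) : ∀ j, 0 < y j := by
  intro j
  obtain ⟨k, hk⟩ := hsc j i
  have e : y j = ∑ t, (R ^ k) j t * y t := by
    have := congrFun (powfix R y hy k) j
    simp only [Matrix.mulVec, dotProduct] at this
    exact this.symm
  rw [e]
  calc (0:ℝ) < (R ^ k) j i * y i := mul_pos hk hi
    _ ≤ ∑ t, (R ^ k) j t * y t :=
      Finset.single_le_sum (f := fun t => (R ^ k) j t * y t)
        (fun t _ => mul_nonneg (pownn R h0 k j t) (hy0 t)) (Finset.mem_univ i)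

/-- absolute value of an eigenvector of a column-stochastic matrix is an eigenvector -/
lemma abseig (R : Matrix (Fin N) (Fin N) ℝ) (h0 : ∀ i j, 0 ≤ R i j)
    (hcol : (fun _ => (1:ℝ)) ᵥ* R = fun _ => 1) (y : Fin N → ℝ) (hy : R *ᵥ y = y) :
    R *ᵥ (fun i => |y i|) = fun i => |y i| := by
  have hge : ∀ i, |y i| ≤ (R *ᵥ fun t => |y t|) i := by
    intro i
    have e : y i = ∑ j, R i j * y j := by
      have := congrFun hy i
      simp only [Matrix.mulVec, dotProduct] at this
      exact this.symm
    simp only [Matrix.mulVec, dotProduct]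
    calc |y i| = |∑ j, R i j * y j| := by rw [← e]
      _ ≤ ∑ j, |R i j * y j| := Finset.abs_sum_le_sum_abs _ _
      _ = ∑ j, R i j * |y j| := by
          apply Finset.sum_congr rfl
          intro j _
          rw [abs_mul, abs_of_nonneg (h0 i j)]
  have hsum : ∑ i, ((R *ᵥ fun t => |y t|) i - |y i|) = 0 := by
    have e1 : ∑ i, (R *ᵥ fun t => |y t|) i = ∑ j, |y j| := by
      simp only [Matrix.mulVec, dotProduct]
      rw [Finset.sum_comm]
      apply Finset.sum_congr rfl
      intro j _
      rw [← Finset.sum_mul, colsum R hcol j, one_mul]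
    rw [Finset.sum_sub_distrib, e1, sub_self]
  have hz := (Finset.sum_eq_zero_iff_of_nonneg
    (fun i _ => by linarith [hge i])).mp hsum
  funext i
  have := hz i (Finset.mem_univ i)
  linarith

/-- existence of positive Perron vector -/
lemma exmu (hN : 0 < N) (R : Matrix (Fin N) (Fin N) ℝ) (h0 : ∀ i j, 0 ≤ R i j)
    (hcol : (fun _ => (1:ℝ)) ᵥ* R = fun _ => 1) (hsc : ∀ i j, ∃ k, 0 < (R ^ k) i j) :
    ∃ μ : Fin N → ℝ, R *ᵥ μ = μ ∧ ∀ i, 0 < μ i := by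
  have : Nonempty (Fin N) := ⟨⟨0, hN⟩⟩
  have hdet : (R - 1).det = 0 := by
    rw [← Matrix.det_transpose]
    rw [← Matrix.exists_mulVec_eq_zero_iff]
    refine ⟨fun _ => 1, ?_, ?_⟩
    · intro hc
      have := congrFun hc ⟨0, hN⟩
      simp at this
    · have : (R - 1)ᵀ = Rᵀ - 1 := by rw [Matrix.transpose_sub, Matrix.transpose_one]
      rw [this, Matrix.sub_mulVec, Matrix.one_mulVec]
      have : Rᵀ *ᵥ (fun _ => (1:ℝ)) = fun _ => 1 := by
        rw [Matrix.mulVec_transpose]; exact hcol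
      rw [this]; simp
  obtain ⟨v, hv0, hv⟩ := (Matrix.exists_mulVec_eq_zero_iff).mpr hdet
  have hRv : R *ᵥ v = v := by
    rw [Matrix.sub_mulVec, Matrix.one_mulVec] at hv
    have := sub_eq_zero.mp hv
    exact this
  obtain ⟨i, hi⟩ : ∃ i, v i ≠ 0 := by
    by_contra hc
    push_neg at hc
    exact hv0 (funext hc)
  refine ⟨fun i => |v i|, abseig R h0 hcol v hRv, ?_⟩
  exact perronpos R h0 hsc (fun i => |v i|) (abseig R h0 hcol v hRv)
    (fun t => abs_nonneg _) i (abs_pos.mpr hi)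

/-- one-dimensionality of the Perron eigenspace -/
lemma kerdim (hN : 0 < N) (R : Matrix (Fin N) (Fin N) ℝ) (h0 : ∀ i j, 0 ≤ R i j)
    (hsc : ∀ i j, ∃ k, 0 < (R ^ k) i j) (μ : Fin N → ℝ) (hμ : R *ᵥ μ = μ)
    (hμpos : ∀ i, 0 < μ i) (y : Fin N → ℝ) (hy : R *ᵥ y = y) : ∃ t : ℝ, y = t • μ := by
  have : Nonempty (Fin N) := ⟨⟨0, hN⟩⟩
  obtain ⟨i0, -, hmax⟩ := Finset.exists_max_image Finset.univ (fun i => y i / μ i)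
    Finset.univ_nonempty
  set t := y i0 / μ i0 with ht
  refine ⟨t, ?_⟩
  set z : Fin N → ℝ := fun i => t * μ i - y i with hz
  have hz0 : ∀ i, 0 ≤ z i := by
    intro i
    have h3 : y i / μ i ≤ t := hmax i (Finset.mem_univ i)
    have h4 := mul_le_mul_of_nonneg_right h3 (le_of_lt (hμpos i))
    rw [div_mul_cancel₀ _ (ne_of_gt (hμpos i))] at h4
    simp only [hz]; linarith
  have hzeig : R *ᵥ z = z := by
    have e : z = t • μ - y := by funext i; simp [hz, smul_eq_mul]
    rw [e, Matrix.mulVec_sub, Matrix.mulVec_smul, hμ, hy]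
  have hzi0 : z i0 = 0 := by
    simp only [hz, ht]
    rw [div_mul_cancel₀ _ (ne_of_gt (hμpos i0))]
    ring
  have hzall : ∀ i, z i = 0 := by
    by_contra hc
    push_neg at hc
    obtain ⟨i, hi⟩ := hc
    have hipos : 0 < z i := lt_of_le_of_ne (hz0 i) (Ne.symm hi)
    have := perronpos R h0 hsc z hzeig hz0 i hipos i0
    rw [hzi0] at this
    exact lt_irrefl _ this
  funext i
  have := hzall i
  simp only [hz] at this
  simp [smul_eq_mul]
  linarith


lemma kron1mv (P : Matrix (Fin N) (Fin N) ℝ) (x : Fin N × Fin m → ℝ) (i : Fin N) (a : Fin m) :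
    ((P ⊗ₖ (1 : Matrix (Fin m) (Fin m) ℝ)) *ᵥ x) (i, a) = ∑ j, P i j * x (j, a) := by
  simp only [Matrix.mulVec, dotProduct, Fintype.sum_prod_type, Matrix.kroneckerMap_apply,
    Matrix.one_apply, mul_ite, mul_one, mul_zero, ite_mul, zero_mul]
  apply Finset.sum_congr rfl
  intro j _
  simp

lemma htilmv (H : Matrix (Fin N) (Fin m) ℝ) (Htil : Matrix (Fin N × Fin m) (Fin N × Fin m) ℝ)
    (hHtil : ∀ i j a b, Htil (i, a) (j, b) = if i = j then H i a * H i b else 0)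
    (w : Fin N × Fin m → ℝ) (i : Fin N) (a : Fin m) :
    (Htil *ᵥ w) (i, a) = ∑ b, H i a * H i b * w (i, b) := by
  simp only [Matrix.mulVec, dotProduct, Fintype.sum_prod_type, hHtil, ite_mul, zero_mul]
  rw [Finset.sum_comm]
  simp [Finset.sum_ite_eq']

lemma master (H : Matrix (Fin N) (Fin m) ℝ) (P Q : Matrix (Fin N) (Fin N) ℝ) (α : ℝ)
    (Htil : Matrix (Fin N × Fin m) (Fin N × Fin m) ℝ)
    (hHtil : ∀ i j a b, Htil (i, a) (j, b) = if i = j then H i a * H i b else 0)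
    (M : Matrix ((Fin N × Fin m) ⊕ (Fin N × Fin m)) ((Fin N × Fin m) ⊕ (Fin N × Fin m)) ℝ)
    (hM : M = Matrix.fromBlocks (P ⊗ₖ (1 : Matrix (Fin m) (Fin m) ℝ)) (-α • 1)
        (-(Htil * ((1 - P) ⊗ₖ (1 : Matrix (Fin m) (Fin m) ℝ))))
        (Q ⊗ₖ (1 : Matrix (Fin m) (Fin m) ℝ) - α • Htil))
    (v : (Fin N × Fin m) ⊕ (Fin N × Fin m) → ℝ) :
    (∀ i a, ((M - 1) *ᵥ v) (Sum.inl (i, a)) =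
      (∑ j, P i j * v (Sum.inl (j, a))) - v (Sum.inl (i, a)) - α * v (Sum.inr (i, a))) ∧
    (∀ i a, ((M - 1) *ᵥ v) (Sum.inr (i, a)) =
      (∑ b, H i a * H i b * ((∑ j, P i j * v (Sum.inl (j, b))) - v (Sum.inl (i, b))
          - α * v (Sum.inr (i, b))))
        + (∑ j, Q i j * v (Sum.inr (j, a))) - v (Sum.inr (i, a))) := by
  subst hM
  have hv : v = Sum.elim (fun p => v (Sum.inl p)) (fun p => v (Sum.inr p)) := by
    funext s; cases s <;> rfl
  set x : Fin N × Fin m → ℝ := fun p => v (Sum.inl p) with hx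
  set y : Fin N × Fin m → ℝ := fun p => v (Sum.inr p) with hy
  have hblocks : (Matrix.fromBlocks (P ⊗ₖ (1 : Matrix (Fin m) (Fin m) ℝ)) (-α • 1)
        (-(Htil * ((1 - P) ⊗ₖ (1 : Matrix (Fin m) (Fin m) ℝ))))
        (Q ⊗ₖ (1 : Matrix (Fin m) (Fin m) ℝ) - α • Htil) - 1) *ᵥ v =
      Sum.elim
        (((P ⊗ₖ (1 : Matrix (Fin m) (Fin m) ℝ)) - 1) *ᵥ x + (-α • 1) *ᵥ y)
        ((-(Htil * ((1 - P) ⊗ₖ (1 : Matrix (Fin m) (Fin m) ℝ)))) *ᵥ x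
          + (Q ⊗ₖ (1 : Matrix (Fin m) (Fin m) ℝ) - α • Htil - 1) *ᵥ y) := by
    rw [show ((1 : Matrix ((Fin N × Fin m) ⊕ (Fin N × Fin m)) _ ℝ)) =
        Matrix.fromBlocks 1 0 0 1 from Matrix.fromBlocks_one.symm]
    rw [sub_eq_add_neg, Matrix.fromBlocks_neg, Matrix.fromBlocks_add]
    rw [hv, Matrix.fromBlocks_mulVec]
    funext s
    cases s <;> simp [sub_eq_add_neg, Matrix.add_mulVec, Matrix.neg_mulVec]
  rw [hblocks]
  constructor
  · intro i a
    simp only [Sum.elim_inl, Pi.add_apply]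
    rw [Matrix.sub_mulVec, Matrix.one_mulVec]
    have h1 : ((-α • (1 : Matrix (Fin N × Fin m) (Fin N × Fin m) ℝ)) *ᵥ y) (i, a) =
        -α * y (i, a) := by
      rw [Matrix.smul_mulVec, Matrix.one_mulVec]; simp
    simp only [Pi.sub_apply, h1, kron1mv P x i a]
    ring
  · intro i a
    simp only [Sum.elim_inr, Pi.add_apply]
    have h2 : ((-(Htil * ((1 - P) ⊗ₖ (1 : Matrix (Fin m) (Fin m) ℝ)))) *ᵥ x) (i, a) =
        -∑ b, H i a * H i b * (x (i, b) - ∑ j, P i j * x (j, b)) := by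
      rw [Matrix.neg_mulVec]
      simp only [Pi.neg_apply, neg_inj]
      rw [← Matrix.mulVec_mulVec, htilmv H Htil hHtil]
      apply Finset.sum_congr rfl
      intro b _
      congr 1
      rw [show ((1 : Matrix (Fin N) (Fin N) ℝ) - P) = 1 - P from rfl]
      have : (((1 - P) ⊗ₖ (1 : Matrix (Fin m) (Fin m) ℝ)) *ᵥ x) (i, b) =
          ∑ j, (1 - P) i j * x (j, b) := kron1mv (1 - P) x i b
      rw [this]
      have : ∑ j, ((1 : Matrix (Fin N) (Fin N) ℝ) - P) i j * x (j, b) =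
          ∑ j, ((if i = j then 1 else 0) - P i j) * x (j, b) := by
        apply Finset.sum_congr rfl
        intro j _
        simp [Matrix.sub_apply, Matrix.one_apply]
      rw [this]
      simp only [sub_mul, ite_mul, one_mul, zero_mul]
      rw [Finset.sum_sub_distrib]
      simp [Finset.sum_ite_eq]
    have h3 : ((Q ⊗ₖ (1 : Matrix (Fin m) (Fin m) ℝ) - α • Htil - 1) *ᵥ y) (i, a) =
        (∑ j, Q i j * y (j, a)) - α * (∑ b, H i a * H i b * y (i, b)) - y (i, a) := by
      rw [Matrix.sub_mulVec, Matrix.sub_mulVec, Matrix.one_mulVec, Matrix.smul_mulVec]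
      simp only [Pi.sub_apply, Pi.smul_apply, smul_eq_mul]
      rw [kron1mv Q y i a, htilmv H Htil hHtil]
    rw [h2, h3]
    rw [Finset.mul_sum, ← Finset.sum_neg_distrib]
    rw [show (∑ b, H i a * H i b * ((∑ j, P i j * x (j, b)) - x (i, b) - α * y (i, b))) =
      (∑ b, (-(H i a * H i b * (x (i, b) - ∑ j, P i j * x (j, b)))
        - α * (H i a * H i b * y (i, b)))) from by
        apply Finset.sum_congr rfl; intro b _; ring]
    rw [Finset.sum_sub_distrib, ← Finset.mul_sum]
    ring


/-- For strongly connected directed graphs, with `P` row stochastic and `Q` column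
stochastic (positive diagonals, common support), the eigenvalue `1` of `M` has
algebraic multiplicity equal to geometric multiplicity equal to `m`. -/
theorem stmt11 (N m : ℕ) (H : Matrix (Fin N) (Fin m) ℝ) (hrank : H.rank = m)
    (P Q : Matrix (Fin N) (Fin N) ℝ)
    (hPnonneg : ∀ i j, 0 ≤ P i j) (hProw : P *ᵥ (fun _ => 1) = fun _ => 1)
    (hQnonneg : ∀ i j, 0 ≤ Q i j) (hQcol : (fun _ => 1) ᵥ* Q = fun _ => 1)
    (hPdiag : ∀ i, 0 < P i i) (hQdiag : ∀ i, 0 < Q i i)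
    (hPQ : ∀ i j, (0 < P i j ↔ 0 < Q i j))
    (hsc : ∀ i j, ∃ k : ℕ, 0 < (P ^ k) i j)
    (α : ℝ) (hα : 0 < α)
    (Htil : Matrix (Fin N × Fin m) (Fin N × Fin m) ℝ)
    (hHtil : ∀ i j a b, Htil (i, a) (j, b) = if i = j then H i a * H i b else 0)
    (M : Matrix ((Fin N × Fin m) ⊕ (Fin N × Fin m)) ((Fin N × Fin m) ⊕ (Fin N × Fin m)) ℝ)
    (hM : M = Matrix.fromBlocks (P ⊗ₖ (1 : Matrix (Fin m) (Fin m) ℝ)) (-α • 1)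
        (-(Htil * ((1 - P) ⊗ₖ (1 : Matrix (Fin m) (Fin m) ℝ))))
        (Q ⊗ₖ (1 : Matrix (Fin m) (Fin m) ℝ) - α • Htil)) :
    Module.finrank ℝ (LinearMap.ker (Matrix.toLin' (M - 1))) = m ∧
    (∀ v : (Fin N × Fin m) ⊕ (Fin N × Fin m) → ℝ,
      (M - 1) *ᵥ ((M - 1) *ᵥ v) = 0 → (M - 1) *ᵥ v = 0) := by
  rcases Nat.eq_zero_or_pos N with hN0 | hN
  · -- degenerate case N = 0
    subst hN0
    have hm : m = 0 := by
      have h1 : H.rank ≤ 0 := by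
        have := H.rank_le_card_height
        simpa using this
      omega
    constructor
    · have h2 : Module.finrank ℝ (LinearMap.ker (Matrix.toLin' (M - 1))) ≤
          Module.finrank ℝ ((Fin 0 × Fin m) ⊕ (Fin 0 × Fin m) → ℝ) :=
        Submodule.finrank_le _
      have h3 : Module.finrank ℝ ((Fin 0 × Fin m) ⊕ (Fin 0 × Fin m) → ℝ) = 0 := by
        simp [Module.finrank_pi]
      omega
    · intro v _
      funext s
      rcases s with ⟨i, a⟩ | ⟨i, a⟩ <;> exact i.elim0
  -- main case
  have hNE : Nonempty (Fin N) := ⟨⟨0, hN⟩⟩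
  have i0 : Fin N := ⟨0, hN⟩
  -- Perron vector of Q
  have hscQ : ∀ i j, ∃ k, 0 < (Q ^ k) i j := by
    intro i j
    obtain ⟨k, hk⟩ := hsc i j
    exact ⟨k, powsupp P Q hPnonneg hQnonneg (fun i j h => (hPQ i j).mp h) k i j hk⟩
  obtain ⟨μ, hμeig, hμpos⟩ := exmu hN Q hQnonneg hQcol hscQ
  -- Perron vector of Pᵀ (left Perron vector of P)
  have hPTnn : ∀ i j, 0 ≤ Pᵀ i j := fun i j => hPnonneg j i
  have hPTcol : (fun _ => (1:ℝ)) ᵥ* Pᵀ = fun _ => 1 := by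
    rw [Matrix.vecMul_transpose]; exact hProw
  have hscPT : ∀ i j, ∃ k, 0 < (Pᵀ ^ k) i j := by
    intro i j
    obtain ⟨k, hk⟩ := hsc j i
    exact ⟨k, by rw [← Matrix.transpose_pow, Matrix.transpose_apply]; exact hk⟩
  obtain ⟨ω, hωeig, hωpos⟩ := exmu hN Pᵀ hPTnn hPTcol hscPT
  have hωμ : 0 < ∑ i, ω i * μ i :=
    Finset.sum_pos (fun i _ => mul_pos (hωpos i) (hμpos i)) Finset.univ_nonempty
  have hωP : ∀ x : Fin N → ℝ, ∑ i, ω i * ((P *ᵥ x) i) = ∑ i, ω i * x i := by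
    intro x
    have h1 : ω ⬝ᵥ (P *ᵥ x) = (ω ᵥ* P) ⬝ᵥ x := Matrix.dotProduct_mulVec ω P x
    have h2 : ω ᵥ* P = ω := by
      rw [← Matrix.mulVec_transpose]; exact hωeig
    rw [h2] at h1
    simpa [dotProduct] using h1
  -- kernel characterization
  have kerchar : ∀ v : (Fin N × Fin m) ⊕ (Fin N × Fin m) → ℝ, (M - 1) *ᵥ v = 0 ↔
      ∃ d : Fin m → ℝ,
        v = Sum.elim (fun p : Fin N × Fin m => d p.2) (fun _ => (0:ℝ)) := by
    intro v
    obtain ⟨k1, k2⟩ := master H P Q α Htil hHtil M hM v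
    constructor
    · intro hv
      have hz : ∀ s, ((M - 1) *ᵥ v) s = 0 := fun s => by rw [hv]; rfl
      -- each column slice of the inr-part vanishes
      have hyz : ∀ a : Fin m, ∀ i, v (Sum.inr (i, a)) = 0 := by
        intro a
        set y : Fin N → ℝ := fun i => v (Sum.inr (i, a)) with hy
        have hQy : Q *ᵥ y = y := by
          funext i
          have h2 := k2 i a
          rw [hz (Sum.inr (i, a))] at h2
          have hbr : ∀ b, (∑ j, P i j * v (Sum.inl (j, b))) - v (Sum.inl (i, b))
              - α * v (Sum.inr (i, b)) = 0 := by
            intro b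
            have := k1 i b
            rw [hz (Sum.inl (i, b))] at this
            linarith
          have hzero : (∑ b, H i a * H i b * ((∑ j, P i j * v (Sum.inl (j, b)))
              - v (Sum.inl (i, b)) - α * v (Sum.inr (i, b)))) = 0 := by
            apply Finset.sum_eq_zero
            intro b _
            rw [hbr b, mul_zero]
          rw [hzero, zero_add] at h2
          simp only [Matrix.mulVec, dotProduct, hy]
          linarith
        have hωy : ∑ i, ω i * y i = 0 := by
          set x : Fin N → ℝ := fun i => v (Sum.inl (i, a)) with hx
          have hPx : ∀ i, (P *ᵥ x) i - x i = α * y i := by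
            intro i
            have := k1 i a
            rw [hz (Sum.inl (i, a))] at this
            simp only [Matrix.mulVec, dotProduct, hx, hy]
            linarith
          have h4 : ∑ i, ω i * ((P *ᵥ x) i - x i) = α * ∑ i, ω i * y i := by
            rw [Finset.mul_sum]
            apply Finset.sum_congr rfl
            intro i _
            rw [hPx i]; ring
          have h5 : ∑ i, ω i * ((P *ᵥ x) i - x i) = 0 := by
            have := hωP x
            rw [show ∑ i, ω i * ((P *ᵥ x) i - x i)
              = (∑ i, ω i * (P *ᵥ x) i) - ∑ i, ω i * x i from by
                rw [← Finset.sum_sub_distrib]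
                apply Finset.sum_congr rfl
                intro i _; ring]
            rw [this]; ring
          rw [h5] at h4
          have := h4.symm
          rcases mul_eq_zero.mp this with h | h
          · exact absurd h (ne_of_gt hα)
          · exact h
        obtain ⟨t, ht⟩ := kerdim hN Q hQnonneg hscQ μ hμeig hμpos y hQy
        have ht0 : t = 0 := by
          rw [ht] at hωy
          simp only [Pi.smul_apply, smul_eq_mul] at hωy
          have : t * ∑ i, ω i * μ i = 0 := by
            rw [Finset.mul_sum]
            rw [← hωy]
            apply Finset.sum_congr rfl
            intro i _; ring
          rcases mul_eq_zero.mp this with h | h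
          · exact h
          · exact absurd h (ne_of_gt hωμ)
        intro i
        have := congrFun ht i
        simp only [Pi.smul_apply, smul_eq_mul, ht0, zero_mul] at this
        exact this
      -- inl slices are constant
      have hxc : ∀ a : Fin m, ∀ i j : Fin N,
          v (Sum.inl (i, a)) = v (Sum.inl (j, a)) := by
        intro a
        set x : Fin N → ℝ := fun i => v (Sum.inl (i, a)) with hx
        have hPx : P *ᵥ x = x := by
          funext i
          have := k1 i a
          rw [hz (Sum.inl (i, a)), hyz a i] at this
          simp only [Matrix.mulVec, dotProduct, hx]
          linarith
        exact rowconst P hPnonneg hProw hsc x hPx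
      refine ⟨fun a => v (Sum.inl (i0, a)), ?_⟩
      funext s
      rcases s with ⟨i, a⟩ | ⟨i, a⟩
      · exact (hxc a i i0)
      · exact hyz a i
    · rintro ⟨d, rfl⟩
      funext s
      rcases s with ⟨i, a⟩ | ⟨i, a⟩
      · rw [k1 i a]
        simp only [Sum.elim_inl, Sum.elim_inr, Pi.zero_apply]
        rw [← Finset.sum_mul, rowsum P hProw i]
        ring
      · rw [k2 i a]
        simp only [Sum.elim_inl, Sum.elim_inr, Pi.zero_apply, mul_zero,
          Finset.sum_const_zero, add_zero, sub_zero]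
        apply Finset.sum_eq_zero
        intro b _
        rw [← Finset.sum_mul, rowsum P hProw i]
        ring
  constructor
  · -- finrank of kernel = m
    set φ : (Fin m → ℝ) →ₗ[ℝ] ((Fin N × Fin m) ⊕ (Fin N × Fin m) → ℝ) :=
      { toFun := fun d => Sum.elim (fun p : Fin N × Fin m => d p.2) (fun _ => (0:ℝ)),
        map_add' := by intro d1 d2; funext s; rcases s with ⟨i, a⟩ | ⟨i, a⟩ <;> simp,
        map_smul' := by intro c d; funext s; rcases s with ⟨i, a⟩ | ⟨i, a⟩ <;> simp } with hφ
    have hker : LinearMap.ker (Matrix.toLin' (M - 1)) = LinearMap.range φ := by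
      ext v
      rw [LinearMap.mem_ker, Matrix.toLin'_apply, LinearMap.mem_range, kerchar v]
      constructor
      · rintro ⟨d, rfl⟩; exact ⟨d, rfl⟩
      · rintro ⟨d, rfl⟩; exact ⟨d, rfl⟩
    rw [hker]
    have hinj : Function.Injective φ := by
      intro d1 d2 h
      funext a
      have := congrFun h (Sum.inl (i0, a))
      simpa [hφ] using this
    rw [LinearMap.finrank_range_of_inj hinj]
    simp
  · -- no generalized eigenvectors
    intro v hvv
    set w : (Fin N × Fin m) ⊕ (Fin N × Fin m) → ℝ := (M - 1) *ᵥ v with hw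
    obtain ⟨d, hd⟩ := (kerchar w).mp hvv
    obtain ⟨k1, k2⟩ := master H P Q α Htil hHtil M hM v
    -- the inr equation, summed over i, forces Hᵀ H d = 0
    have hsum : ∀ a : Fin m, ∑ i, H i a * (∑ b, H i b * d b) = 0 := by
      intro a
      have hrow_eq : ∀ i, (0:ℝ) = (∑ b, H i a * H i b * d b)
          + (∑ j, Q i j * v (Sum.inr (j, a))) - v (Sum.inr (i, a)) := by
        intro i
        have h2 := k2 i a
        have hwr : w (Sum.inr (i, a)) = 0 := by rw [hd]; rfl
        have hbr : ∀ b, (∑ j, P i j * v (Sum.inl (j, b))) - v (Sum.inl (i, b))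
            - α * v (Sum.inr (i, b)) = d b := by
          intro b
          have h1 := k1 i b
          have hwl : w (Sum.inl (i, b)) = d b := by rw [hd]; rfl
          rw [← hw] at h1
          rw [hwl] at h1
          linarith
        rw [← hw, hwr] at h2
        rw [h2]
        congr 1
        congr 1
        apply Finset.sum_congr rfl
        intro b _
        rw [hbr b]
      have hQpart : ∑ i, ((∑ j, Q i j * v (Sum.inr (j, a))) - v (Sum.inr (i, a))) = 0 := by
        rw [Finset.sum_sub_distrib]
        rw [Finset.sum_comm]
        rw [show ∑ j, ∑ i, Q i j * v (Sum.inr (j, a))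
            = ∑ j, v (Sum.inr (j, a)) from by
          apply Finset.sum_congr rfl
          intro j _
          rw [← Finset.sum_mul, colsum Q hQcol j, one_mul]]
        ring
      have htot : (0:ℝ) = ∑ i, ((∑ b, H i a * H i b * d b)
          + ((∑ j, Q i j * v (Sum.inr (j, a))) - v (Sum.inr (i, a)))) := by
        rw [← Finset.sum_const_zero (s := (Finset.univ : Finset (Fin N)))]
        apply Finset.sum_congr rfl
        intro i _
        have := hrow_eq i
        linarith
      rw [Finset.sum_add_distrib, hQpart, add_zero] at htot
      rw [show ∑ i, H i a * (∑ b, H i b * d b)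
          = ∑ i, ∑ b, H i a * H i b * d b from by
        apply Finset.sum_congr rfl
        intro i _
        rw [Finset.mul_sum]
        apply Finset.sum_congr rfl
        intro b _
        ring]
      exact htot.symm
    -- sum of squares argument : H *ᵥ d = 0
    have hHd : H *ᵥ d = 0 := by
      have hsq : ∑ i, (∑ b, H i b * d b) ^ 2 = 0 := by
        have h6 : ∑ a, d a * (∑ i, H i a * (∑ b, H i b * d b)) = 0 :=
          Finset.sum_eq_zero (fun a _ => by rw [hsum a, mul_zero])
        rw [show ∑ a, d a * (∑ i, H i a * (∑ b, H i b * d b))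
            = ∑ a, ∑ i, d a * H i a * (∑ b, H i b * d b) from by
          apply Finset.sum_congr rfl
          intro a _
          rw [Finset.mul_sum]
          apply Finset.sum_congr rfl
          intro i _
          ring] at h6
        rw [Finset.sum_comm] at h6
        rw [show ∑ i, ∑ a, d a * H i a * (∑ b, H i b * d b)
            = ∑ i, (∑ b, H i b * d b) ^ 2 from by
          apply Finset.sum_congr rfl
          intro i _
          rw [show ∑ a, d a * H i a * (∑ b, H i b * d b)
              = (∑ a, H i a * d a) * (∑ b, H i b * d b) from by
            rw [Finset.sum_mul]
            apply Finset.sum_congr rfl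
            intro a _
            ring]
          ring] at h6
        exact h6
      have hz := (Finset.sum_eq_zero_iff_of_nonneg
        (fun i _ => sq_nonneg (∑ b, H i b * d b))).mp hsq
      funext i
      have := hz i (Finset.mem_univ i)
      have h7 : ∑ b, H i b * d b = 0 := by
        exact pow_eq_zero_iff (n := 2) (by norm_num) |>.mp this
      simp only [Matrix.mulVec, dotProduct, Pi.zero_apply]
      exact h7
    -- full column rank forces d = 0
    have hd0 : d = 0 := by
      have h1 := LinearMap.finrank_range_add_finrank_ker H.mulVecLin
      have h2 : Module.finrank ℝ (LinearMap.range H.mulVecLin) = m := hrank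
      have h3 : Module.finrank ℝ (Fin m → ℝ) = m := by simp
      rw [h2, h3] at h1
      have h4 : Module.finrank ℝ (LinearMap.ker H.mulVecLin) = 0 := by omega
      have h5 : LinearMap.ker H.mulVecLin = ⊥ := Submodule.finrank_eq_zero.mp h4
      have h6 : d ∈ LinearMap.ker H.mulVecLin := by
        rw [LinearMap.mem_ker, Matrix.mulVecLin_apply]
        exact hHd
      rw [h5, Submodule.mem_bot] at h6
      exact h6
    show w = 0
    rw [hd, hd0]
    funext s
    rcases s with ⟨i, a⟩ | ⟨i, a⟩ <;> simp
end

section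
/- Let W be symmetric doubly stochastic with eigenvalues in (−1,1] and simple eigenvalue 1, H̃ = diag(h₁h₁ᵀ,…,h_Nh_Nᵀ) with H of full column rank, and α > 0. If v₁ ∈ ℂ^{Nm} is nonzero with v₁*((W²−I_N)⊗I_m − αH̃)v₁ = 0, then (W⊗I_m)v₁ = v₁ and v₁*H̃v₁ = 0, and hence v₁ = 1_N ⊗ c for some c ∈ ℝ^m with Hc = 0, forcing v₁ = 0, a contradiction; therefore v₁*((W²−I_N)⊗I_m − αH̃)v₁ < 0 for all nonzero v₁. -/
open Matrix Kronecker

/-!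
With `P = 1 - W` and `Q = W + 1`, the identity `P Q P + Q P Q = 2 (1 - W²)` shows that `1 - W²`
is positive semidefinite and, `Q` being positive definite, that its form vanishes only on
vectors fixed by `W`. The real form of `(1 - W²) ⊗ I + α H̃` at `x` is the sum of the forms of
`1 - W²` at the columns of `x` and of `α ∑ᵢ (hᵢ ⬝ xᵢ)²`. If it vanishes, every column is fixed
by `W`, hence constant, so `x = 1 ⊗ c` with `H c = 0`, and `c = 0` by the rank condition.
Over `ℂ`, the real part of the form is the sum of the real forms at `re v` and `im v`.
-/

theorem Matrix.mulVec_injective_of_rank_eq_card {K m n : Type*} [Field K] [Fintype m] [Fintype n]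
    {H : Matrix m n K} (hH : H.rank = Fintype.card n) : Function.Injective H.mulVec :=
  Matrix.mulVec_injective_iff.2 <| linearIndependent_iff_card_eq_finrank_span.2 <| by
    rw [← hH, rank_eq_finrank_span_cols, Set.finrank]

theorem Matrix.re_star_dotProduct_map_ofReal_mulVec {n : Type*} [Fintype n] (M : Matrix n n ℝ)
    (v : n → ℂ) :
    (star v ⬝ᵥ (M.map Complex.ofReal *ᵥ v)).re =
      (fun p => (v p).re) ⬝ᵥ (M *ᵥ fun p => (v p).re) +
        (fun p => (v p).im) ⬝ᵥ (M *ᵥ fun p => (v p).im) := by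
  simp only [dotProduct, mulVec, map_apply, Pi.star_apply, Complex.re_sum, Finset.mul_sum,
    ← Finset.sum_add_distrib]
  refine Finset.sum_congr rfl fun p _ => Finset.sum_congr rfl fun q _ => ?_
  simp [Complex.mul_re]

theorem Matrix.re_star_dotProduct_map_ofReal_mulVec_neg {n : Type*} [Fintype n]
    {M : Matrix n n ℝ} (hM : ∀ x : n → ℝ, x ≠ 0 → x ⬝ᵥ (M *ᵥ x) < 0) {v : n → ℂ} (hv : v ≠ 0) :
    (star v ⬝ᵥ (M.map Complex.ofReal *ᵥ v)).re < 0 := by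
  have hM' : ∀ x : n → ℝ, x ⬝ᵥ (M *ᵥ x) ≤ 0 := fun x => by
    rcases eq_or_ne x 0 with rfl | hx
    · simp
    · exact (hM x hx).le
  rw [re_star_dotProduct_map_ofReal_mulVec]
  by_cases hre : (fun p => (v p).re) = 0
  · have him : (fun p => (v p).im) ≠ 0 := fun him =>
      hv <| funext fun p => Complex.ext (congrFun hre p) (congrFun him p)
    linarith [hM _ him, hM' fun p => (v p).re]
  · linarith [hM _ hre, hM' fun p => (v p).im]

theorem Matrix.dotProduct_kronecker_one_mulVec {R n m : Type*} [CommSemiring R] [Fintype n]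
    [Fintype m] [DecidableEq m] (A : Matrix n n R) (x : n × m → R) :
    x ⬝ᵥ ((A ⊗ₖ (1 : Matrix m m R)) *ᵥ x) =
      ∑ a, (fun i => x (i, a)) ⬝ᵥ (A *ᵥ fun i => x (i, a)) := by
  simp only [dotProduct, mulVec, kroneckerMap_apply, one_apply, mul_ite, mul_one, mul_zero,
    ite_mul, zero_mul, Fintype.sum_prod_type, Finset.sum_ite_eq, Finset.mem_univ, ↓reduceIte,
    Finset.mul_sum]
  rw [Finset.sum_comm]

theorem dotProduct_mulVec_eq_sum_sq {R n m : Type*} [CommRing R] [Fintype n] [Fintype m]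
    [DecidableEq n] (H : Matrix n m R) (Htil : Matrix (n × m) (n × m) R)
    (hHtil : ∀ i j a b, Htil (i, a) (j, b) = if i = j then H i a * H i b else 0)
    (x : n × m → R) :
    x ⬝ᵥ (Htil *ᵥ x) = ∑ i, (∑ a, H i a * x (i, a)) ^ 2 := by
  simp only [dotProduct, mulVec, hHtil, ite_mul, zero_mul, Fintype.sum_prod_type,
    Finset.sum_ite_irrel, Finset.sum_const_zero, Finset.sum_ite_eq, Finset.mem_univ, ↓reduceIte,
    Finset.mul_sum, sq]
  simp only [Finset.sum_mul]
  exact Finset.sum_congr rfl fun i _ => Finset.sum_congr rfl fun a _ =>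
    Finset.sum_congr rfl fun b _ => by ring

section OneSubSq

variable {n : Type*} [Fintype n] [DecidableEq n] {W : Matrix n n ℝ}

theorem Matrix.two_mul_dotProduct_one_sub_sq_mulVec (hW : W.IsSymm) (x : n → ℝ) :
    2 * (x ⬝ᵥ ((1 - W ^ 2) *ᵥ x)) =
      ((1 - W) *ᵥ x) ⬝ᵥ ((W + 1) *ᵥ ((1 - W) *ᵥ x)) +
        ((W + 1) *ᵥ x) ⬝ᵥ ((1 - W) *ᵥ ((W + 1) *ᵥ x)) := by
  have hsandwich : ∀ A B : Matrix n n ℝ, Aᵀ = A →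
      (A *ᵥ x) ⬝ᵥ (B *ᵥ (A *ᵥ x)) = x ⬝ᵥ ((A * B * A) *ᵥ x) := fun A B hA => by
    rw [← mulVec_mulVec, ← mulVec_mulVec, dotProduct_mulVec x A, ← mulVec_transpose, hA]
  rw [hsandwich _ _ (by simp [hW.eq]), hsandwich _ _ (by simp [hW.eq]), ← dotProduct_add,
    ← add_mulVec, two_mul, ← dotProduct_add, ← add_mulVec]
  congr 2
  noncomm_ring

theorem Matrix.dotProduct_one_sub_sq_mulVec_nonneg (hW : W.IsSymm) (hlow : (W + 1).PosSemidef)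
    (hup : (1 - W).PosSemidef) (x : n → ℝ) : 0 ≤ x ⬝ᵥ ((1 - W ^ 2) *ᵥ x) := by
  have := two_mul_dotProduct_one_sub_sq_mulVec hW x
  have h1 := hlow.dotProduct_mulVec_nonneg ((1 - W) *ᵥ x)
  have h2 := hup.dotProduct_mulVec_nonneg ((W + 1) *ᵥ x)
  simp only [star_trivial] at h1 h2
  linarith

theorem Matrix.mulVec_eq_self_of_dotProduct_one_sub_sq_mulVec_eq_zero (hW : W.IsSymm)
    (hlow : (W + 1).PosDef) (hup : (1 - W).PosSemidef) {x : n → ℝ}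
    (hx : x ⬝ᵥ ((1 - W ^ 2) *ᵥ x) = 0) : W *ᵥ x = x := by
  have := two_mul_dotProduct_one_sub_sq_mulVec hW x
  have h2 := hup.dotProduct_mulVec_nonneg ((W + 1) *ᵥ x)
  simp only [star_trivial] at h2
  by_contra hne
  have hne' : (1 - W) *ᵥ x ≠ 0 := by
    rwa [sub_mulVec, one_mulVec, sub_ne_zero, ne_comm]
  have h1 := hlow.dotProduct_mulVec_pos hne'
  simp only [star_trivial] at h1
  linarith

end OneSubSq

theorem eq_zero_of_forall_col_eq_const {R n m : Type*} [CommSemiring R] [Fintype m]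
    {H : Matrix n m R} (hH : Function.Injective H.mulVec) {x : n × m → R}
    (hcol : ∀ a, ∃ c, (fun i => x (i, a)) = fun _ => c) (hrow : ∀ i, ∑ a, H i a * x (i, a) = 0) :
    x = 0 := by
  choose c hc using hcol
  have hxc : ∀ i a, x (i, a) = c a := fun i a => congrFun (hc a) i
  have hc0 : c = 0 := hH <| funext fun i => by simpa [mulVec, dotProduct, hxc] using hrow i
  funext ⟨i, a⟩
  simp [hxc, hc0]

theorem dotProduct_sq_sub_one_kronecker_sub_smul_mulVec_neg {n m : Type*} [Fintype n]
    [DecidableEq n] [Fintype m] [DecidableEq m] {H : Matrix n m ℝ}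
    (hH : Function.Injective H.mulVec) {W : Matrix n n ℝ} (hW : W.IsSymm)
    (hlow : (W + 1).PosDef) (hup : (1 - W).PosSemidef)
    (hsimple : ∀ v : n → ℝ, W *ᵥ v = v → ∃ c : ℝ, v = fun _ => c)
    {Htil : Matrix (n × m) (n × m) ℝ}
    (hHtil : ∀ i j a b, Htil (i, a) (j, b) = if i = j then H i a * H i b else 0)
    {α : ℝ} (hα : 0 < α) {x : n × m → ℝ} (hx : x ≠ 0) :
    x ⬝ᵥ ((((W ^ 2 - 1) ⊗ₖ (1 : Matrix m m ℝ)) - α • Htil) *ᵥ x) < 0 := by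
  have hcols : ∀ a, 0 ≤ (fun i => x (i, a)) ⬝ᵥ ((1 - W ^ 2) *ᵥ fun i => x (i, a)) :=
    fun a => dotProduct_one_sub_sq_mulVec_nonneg hW hlow.posSemidef hup _
  have hform : x ⬝ᵥ ((((W ^ 2 - 1) ⊗ₖ (1 : Matrix m m ℝ)) - α • Htil) *ᵥ x) =
      -(∑ a, (fun i => x (i, a)) ⬝ᵥ ((1 - W ^ 2) *ᵥ fun i => x (i, a)) +
        α * ∑ i, (∑ a, H i a * x (i, a)) ^ 2) := by
    rw [sub_mulVec, dotProduct_sub, dotProduct_kronecker_one_mulVec, smul_mulVec,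
      dotProduct_smul, dotProduct_mulVec_eq_sum_sq H Htil hHtil, smul_eq_mul, neg_add,
      ← Finset.sum_neg_distrib, sub_eq_add_neg]
    simp only [← neg_sub (1 : Matrix n n ℝ), neg_mulVec, dotProduct_neg]
  have hcols_sum := Finset.sum_nonneg fun a (_ : a ∈ Finset.univ) => hcols a
  have hrows_sum : 0 ≤ α * ∑ i, (∑ a, H i a * x (i, a)) ^ 2 := by positivity
  rw [hform, neg_lt_zero]
  refine lt_of_le_of_ne (add_nonneg hcols_sum hrows_sum) (Ne.symm fun h0 => hx ?_)
  rw [add_eq_zero_iff_of_nonneg hcols_sum hrows_sum,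
    Finset.sum_eq_zero_iff_of_nonneg fun a _ => hcols a, mul_eq_zero, or_iff_right hα.ne',
    Finset.sum_eq_zero_iff_of_nonneg fun i _ => sq_nonneg _] at h0
  obtain ⟨hcol0, hrow0⟩ := h0
  exact eq_zero_of_forall_col_eq_const hH
    (fun a => hsimple _ (mulVec_eq_self_of_dotProduct_one_sub_sq_mulVec_eq_zero hW hlow hup
      (hcol0 a (Finset.mem_univ a))))
    (fun i => pow_eq_zero_iff two_ne_zero |>.mp (hrow0 i (Finset.mem_univ i)))

theorem stmt15_general (N m : ℕ) (H : Matrix (Fin N) (Fin m) ℝ) (hrank : H.rank = m)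
    (W : Matrix (Fin N) (Fin N) ℝ) (hsymm : W.IsSymm)
    (hlow : (W + 1).PosDef) (hup : ((1 : Matrix (Fin N) (Fin N) ℝ) - W).PosSemidef)
    (hsimple : ∀ v : Fin N → ℝ, W *ᵥ v = v → ∃ c : ℝ, v = fun _ => c)
    (Htil : Matrix (Fin N × Fin m) (Fin N × Fin m) ℝ)
    (hHtil : ∀ i j a b, Htil (i, a) (j, b) = if i = j then H i a * H i b else 0)
    (α : ℝ) (hα : 0 < α) :
    ∀ v₁ : Fin N × Fin m → ℂ, v₁ ≠ 0 →
      (star v₁ ⬝ᵥ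
        ((((W ^ 2 - 1) ⊗ₖ (1 : Matrix (Fin m) (Fin m) ℝ)) - α • Htil).map Complex.ofReal *ᵥ v₁)).re < 0 := by
  have hH : Function.Injective H.mulVec :=
    mulVec_injective_of_rank_eq_card (by rw [hrank, Fintype.card_fin])
  exact fun v₁ hv₁ => re_star_dotProduct_map_ofReal_mulVec_neg
    (fun x hx => dotProduct_sq_sub_one_kronecker_sub_smul_mulVec_neg hH hsymm hlow hup hsimple
      hHtil hα hx) hv₁

/-- For all nonzero `v₁ ∈ ℂ^{Nm}`, `v₁*((W²−I)⊗I_m − αH̃)v₁ < 0`. -/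
theorem stmt15 (N m : ℕ) (H : Matrix (Fin N) (Fin m) ℝ) (hrank : H.rank = m)
    (W : Matrix (Fin N) (Fin N) ℝ) (hsymm : W.IsSymm)
    (hnonneg : ∀ i j, 0 ≤ W i j) (hrow : W *ᵥ (fun _ => 1) = fun _ => 1)
    (hlow : (W + 1).PosDef) (hup : ((1 : Matrix (Fin N) (Fin N) ℝ) - W).PosSemidef)
    (hsimple : ∀ v : Fin N → ℝ, W *ᵥ v = v → ∃ c : ℝ, v = fun _ => c)
    (Htil : Matrix (Fin N × Fin m) (Fin N × Fin m) ℝ)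
    (hHtil : ∀ i j a b, Htil (i, a) (j, b) = if i = j then H i a * H i b else 0)
    (α : ℝ) (hα : 0 < α) :
    ∀ v₁ : Fin N × Fin m → ℂ, v₁ ≠ 0 →
      (star v₁ ⬝ᵥ
        ((((W ^ 2 - 1) ⊗ₖ (1 : Matrix (Fin m) (Fin m) ℝ)) - α • Htil).map Complex.ofReal *ᵥ v₁)).re < 0 :=
  stmt15_general N m H hrank W hsymm hlow hup hsimple Htil hHtil α hα
end

section
/- With W symmetric doubly stochastic (eigenvalues in (−1,1]), H̃ ⪰ 0, and ᾱ = 1/(2λ_max(((I_N+W)⁻²⊗I_m)H̃)) finite, the matrix M with step-size α = ᾱ has −1 as an eigenvalue. -/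
open Matrix Kronecker

/-- At the critical step-size `ᾱ = 1/(2λ_max(((I+W)⁻²⊗I_m)H̃))`, the matrix `M`
has `−1` as an eigenvalue, i.e. `det(M + I) = 0`. -/
theorem stmt17 (N m : ℕ) (W : Matrix (Fin N) (Fin N) ℝ) (hsymm : W.IsSymm)
    (hnonneg : ∀ i j, 0 ≤ W i j) (hrow : W *ᵥ (fun _ => 1) = fun _ => 1)
    (hlow : (W + 1).PosDef) (hup : ((1 : Matrix (Fin N) (Fin N) ℝ) - W).PosSemidef)
    (Htil : Matrix (Fin N × Fin m) (Fin N × Fin m) ℝ) (hH : Htil.PosSemidef)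
    (lmax : ℝ)
    (hlmax : lmax = sSup (spectrum ℝ
      (((((1 : Matrix (Fin N) (Fin N) ℝ) + W) ^ 2)⁻¹ ⊗ₖ (1 : Matrix (Fin m) (Fin m) ℝ)) * Htil)))
    (hlpos : 0 < lmax)
    (abar : ℝ) (habar : abar = 1 / (2 * lmax))
    (M : Matrix ((Fin N × Fin m) ⊕ (Fin N × Fin m)) ((Fin N × Fin m) ⊕ (Fin N × Fin m)) ℝ)
    (hM : M = Matrix.fromBlocks (W ⊗ₖ (1 : Matrix (Fin m) (Fin m) ℝ)) (-abar • 1)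
        (-(Htil * ((1 - W) ⊗ₖ (1 : Matrix (Fin m) (Fin m) ℝ))))
        (W ⊗ₖ (1 : Matrix (Fin m) (Fin m) ℝ) - abar • Htil)) :
    (M + 1).det = 0 := by
  have hl0 : lmax ≠ 0 := ne_of_gt hlpos
  have habar0 : abar ≠ 0 := by
    rw [habar]
    positivity
  set A : Matrix (Fin N × Fin m) (Fin N × Fin m) ℝ := W ⊗ₖ (1 : Matrix (Fin m) (Fin m) ℝ)
    with hA
  set Q : Matrix (Fin N × Fin m) (Fin N × Fin m) ℝ :=
    (((1 : Matrix (Fin N) (Fin N) ℝ) + W) ^ 2) ⊗ₖ (1 : Matrix (Fin m) (Fin m) ℝ) with hQ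
  set R : Matrix (Fin N × Fin m) (Fin N × Fin m) ℝ :=
    ((((1 : Matrix (Fin N) (Fin N) ℝ) + W) ^ 2)⁻¹) ⊗ₖ (1 : Matrix (Fin m) (Fin m) ℝ) with hR
  -- the key small matrices
  have hPdet : IsUnit (((1 : Matrix (Fin N) (Fin N) ℝ) + W) ^ 2).det := by
    have h1 : (0 : ℝ) < (W + 1).det := hlow.det_pos
    rw [Matrix.det_pow]
    rw [add_comm] at h1
    exact (pow_ne_zero 2 (ne_of_gt h1)).isUnit
  have hQR : Q * R = 1 := by
    rw [hQ, hR, ← Matrix.mul_kronecker_mul, Matrix.mul_nonsing_inv _ hPdet, one_mul,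
      Matrix.one_kronecker_one]
  -- the spectrum argument
  have hne : (spectrum ℝ (R * Htil)).Nonempty := by
    by_contra h
    rw [Set.not_nonempty_iff_eq_empty] at h
    rw [hlmax, h, Real.sSup_empty] at hlpos
    exact lt_irrefl _ hlpos
  have hmem : lmax ∈ spectrum ℝ (R * Htil) := by
    rw [hlmax]
    exact Set.Nonempty.csSup_mem hne (Matrix.finite_spectrum _)
  have hdet1 : (lmax • (1 : Matrix (Fin N × Fin m) (Fin N × Fin m) ℝ) - R * Htil).det = 0 := by
    rw [spectrum.mem_iff] at hmem
    by_contra hd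
    exact hmem (by
      rw [Algebra.algebraMap_eq_smul_one]
      exact (Matrix.isUnit_iff_isUnit_det _).mpr (isUnit_iff_ne_zero.mpr hd))
  have hdet2 : (lmax • Q - Htil).det = 0 := by
    have hfact : lmax • Q - Htil = Q * (lmax • (1 : Matrix _ _ ℝ) - R * Htil) := by
      rw [mul_sub, mul_smul_comm, mul_one, ← mul_assoc, hQR, one_mul]
    rw [hfact, Matrix.det_mul, hdet1, mul_zero]
  -- the singular matrix (I+W)²⊗I − 2ᾱ H̃
  have hone : (1 : Matrix (Fin N × Fin m) (Fin N × Fin m) ℝ) + A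
      = ((1 : Matrix (Fin N) (Fin N) ℝ) + W) ⊗ₖ (1 : Matrix (Fin m) (Fin m) ℝ) := by
    rw [hA, Matrix.add_kronecker, Matrix.one_kronecker_one]
  have hQA : Q = (1 + A) ^ 2 := by
    rw [hQ, hone, pow_two, pow_two, ← Matrix.mul_kronecker_mul, one_mul]
  have h2a : 2 * abar = lmax⁻¹ := by
    rw [habar]
    field_simp
  have hKdet : ((1 + A) ^ 2 - (2 * abar) • Htil).det = 0 := by
    have hKeq : (1 + A) ^ 2 - (2 * abar) • Htil = lmax⁻¹ • (lmax • Q - Htil) := by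
      rw [smul_sub, smul_smul, inv_mul_cancel₀ hl0, one_smul, h2a, hQA]
    rw [hKeq, Matrix.det_smul, hdet2, mul_zero]
  obtain ⟨x, hx0, hKx⟩ := Matrix.exists_mulVec_eq_zero_iff.mpr hKdet
  -- build the kernel vector of M + 1
  set y : (Fin N × Fin m) → ℝ := abar⁻¹ • ((A + 1) *ᵥ x) with hy
  have hsub : ((1 - W) ⊗ₖ (1 : Matrix (Fin m) (Fin m) ℝ))
      = 1 - A := by
    have h1 : (1 : Matrix (Fin N) (Fin N) ℝ) - W = 1 + (-1 : ℝ) • W := by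
      rw [neg_one_smul, ← sub_eq_add_neg]
    rw [h1, Matrix.add_kronecker, Matrix.smul_kronecker, Matrix.one_kronecker_one, ← hA,
      neg_one_smul, ← sub_eq_add_neg]
  have hM1 : M + 1 = Matrix.fromBlocks (A + 1) (-abar • 1) (-(Htil * (1 - A)))
      (A - abar • Htil + 1) := by
    rw [hM, ← Matrix.fromBlocks_one, Matrix.fromBlocks_add, hsub]
    simp
  rw [← Matrix.exists_mulVec_eq_zero_iff]
  refine ⟨Sum.elim x y, fun h => hx0 (funext fun i => congrFun h (Sum.inl i)), ?_⟩
  rw [hM1, Matrix.fromBlocks_mulVec]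
  simp only [Sum.elim_comp_inl, Sum.elim_comp_inr]
  have h1 : (A + 1) *ᵥ x + (-abar • 1) *ᵥ y = 0 := by
    rw [Matrix.smul_mulVec, Matrix.one_mulVec, hy, smul_smul, neg_mul,
      mul_inv_cancel₀ habar0, neg_smul, one_smul, add_neg_cancel]
  have key : abar • (-(Htil * ((1 : Matrix (Fin N × Fin m) (Fin N × Fin m) ℝ) - A)))
      + (A - abar • Htil + 1) * (A + 1) = (1 + A) ^ 2 - (2 * abar) • Htil := by
    simp only [pow_two, mul_sub, sub_mul, mul_add, add_mul, smul_sub, smul_add, smul_neg,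
      smul_mul_assoc, mul_one, one_mul, two_mul, add_smul]
    abel
  have h2 : (-(Htil * (1 - A))) *ᵥ x + (A - abar • Htil + 1) *ᵥ y = 0 := by
    rw [hy, Matrix.mulVec_smul, Matrix.mulVec_mulVec]
    have hC : (-(Htil * ((1 : Matrix (Fin N × Fin m) (Fin N × Fin m) ℝ) - A))) *ᵥ x
        = abar⁻¹ • ((abar • (-(Htil * (1 - A)))) *ᵥ x) := by
      rw [Matrix.smul_mulVec, smul_smul, inv_mul_cancel₀ habar0, one_smul]
    rw [hC, ← smul_add, ← Matrix.add_mulVec, key, hKx, smul_zero]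
  rw [h1, h2]
  ext (i | i) <;> simp
end
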